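/- arXiv:2508.18178 — 9 statements merged into one kernel-verified Lean document; each statement's English description precedes it below -/
import Mathlib

section
/- Let U and V be real Hilbert spaces and A : U → V a nonzero compact bounded linear operator. Then there exist N ∈ ℕ ∪ {∞}, a nonincreasing sequence (σ_i)_{i<N} of positive real numbers (which is a null sequence if N = ∞), an orthonormal family (u_i)_{i<N} in U whose closed linear span is ker(A)^⊥, and an orthonormal family (v_i)_{i<N} in V whose closed linear span is the closure of range(A), such that A u_i = σ_i v_i and A* v_i = σ_i u_i for every i < N, and moreover A u = Σ_{i<N} σ_i ⟨u, u_i⟩ v_i for every u ∈ U. -/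
/-!
Put `T = A* A`, a compact positive operator with `ker T = ker A`. Deflate: on the closed
`T`-invariant subspace `E_n` orthogonal to the eigenvectors `u_0, …, u_{n-1}` found so far, the
restriction of `T` is again compact and positive, so its norm `λ_n` is an eigenvalue (the spectral
radius of a self-adjoint operator is its norm, and nonzero spectral values of a compact operator
are eigenvalues); let `u_n ∈ E_n` be a unit eigenvector. The `λ_n` decrease, and they tend to `0`
because a compact operator cannot keep the images `λ_n u_n` of an orthonormal sequence uniformly
apart. As `‖T x‖ ≤ λ_n ‖x‖` on `E_n`, the operator `T` vanishes on the orthogonal complement of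
all the `u_n`, so they span `ker(A)ᗮ`. The process stops at the first `N` with `T = 0` on `E_N`.
Finally `σ_n = √λ_n`, `v_n = σ_n⁻¹ A u_n`, and the series for `A u` is `A` applied to the
expansion of the projection of `u` onto `ker(A)ᗮ` in the Hilbert basis `(u_n)`.
-/

open scoped Topology InnerProductSpace RealInnerProductSpace
open Filter Submodule

section OrthonormalExpansion

variable {𝕜 E ι : Type*} [RCLike 𝕜] [NormedAddCommGroup E] [InnerProductSpace 𝕜 E]

theorem Submodule.mem_orthogonal_span_range_iff {e : ι → E} {y : E} :
    y ∈ (span 𝕜 (Set.range e))ᗮ ↔ ∀ i, ⟪e i, y⟫_𝕜 = 0 := by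
  refine ⟨fun hy i => (mem_orthogonal _ y).mp hy _ (subset_span ⟨i, rfl⟩), fun h => ?_⟩
  rw [mem_orthogonal']
  intro u hu
  have hle : span 𝕜 (Set.range e) ≤ LinearMap.ker (innerₛₗ 𝕜 y) :=
    span_le.mpr (Set.range_subset_iff.mpr fun i => by
      rw [SetLike.mem_coe, LinearMap.mem_ker, innerₛₗ_apply_apply, ← inner_conj_symm, h i,
        map_zero])
  exact hle hu

theorem Orthonormal.hasSum_inner_smul_starProjection [CompleteSpace E] {e : ι → E}
    (he : Orthonormal 𝕜 e) (x : E) :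
    HasSum (fun i => ⟪e i, x⟫_𝕜 • e i)
      ((span 𝕜 (Set.range e)).topologicalClosure.starProjection x) := by
  set K := (span 𝕜 (Set.range e)).topologicalClosure
  let e' : ι → K := fun i => ⟨e i, le_topologicalClosure _ (subset_span ⟨i, rfl⟩)⟩
  have he' : Orthonormal 𝕜 e' := he.codRestrict K _
  have hbot : (span 𝕜 (Set.range e'))ᗮ = ⊥ := by
    refine eq_bot_iff.mpr fun y hy => ?_
    have hyK : (y : E) ∈ Kᗮ := by
      rw [orthogonal_closure, mem_orthogonal_span_range_iff]
      exact fun i => mem_orthogonal_span_range_iff.mp hy i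
    exact (mem_bot 𝕜).mpr (Subtype.ext (disjoint_def.mp K.orthogonal_disjoint _ y.2 hyK))
  have h := (HilbertBasis.mkOfOrthogonalEqBot he' hbot).hasSum_orthogonalProjectionOnto x
  rw [HilbertBasis.coe_mkOfOrthogonalEqBot] at h
  simpa using K.subtypeL.hasSum h

end OrthonormalExpansion

theorem ENat.exists_coe_lt_iff_of_antitone {P : ℕ → Prop} (hP : Antitone P) :
    ∃ N : ℕ∞, ∀ n : ℕ, (n : ℕ∞) < N ↔ P n := by
  refine ⟨⨆ (m : ℕ) (_ : P m), ((m + 1 : ℕ) : ℕ∞), fun n => ?_⟩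
  simp only [lt_iSup_iff, Nat.cast_lt, exists_prop]
  exact ⟨fun ⟨m, hm, hnm⟩ => hP (Nat.lt_succ_iff.mp hnm) hm, fun h => ⟨n, h, n.lt_succ_self⟩⟩

section CompactOperator

variable {H : Type*} [NormedAddCommGroup H] [InnerProductSpace ℝ H]

theorem IsCompactOperator.exists_abs_lt_of_orthonormal {T : H →L[ℝ] H}
    (hT : IsCompactOperator T) {u : ℕ → H} (hu : Orthonormal ℝ u) {c : ℕ → ℝ}
    (hTu : ∀ n, T (u n) = c n • u n) {ε : ℝ} (hε : 0 < ε) :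
    ∃ n, |c n| < ε := by
  by_contra! hc
  have hsep : ∀ {i j}, i ≠ j → ε ≤ dist (T (u i)) (T (u j)) := by
    intro i j hij
    have hsq : dist (T (u i)) (T (u j)) ^ 2 = c i ^ 2 + c j ^ 2 := by
      rw [dist_eq_norm, hTu, hTu, norm_sub_sq_real, norm_smul, norm_smul, hu.1, hu.1,
        real_inner_smul_left, real_inner_smul_right, hu.2 hij, Real.norm_eq_abs,
        Real.norm_eq_abs]
      simp only [mul_one, mul_zero, sub_zero, sq_abs]
    nlinarith [pow_le_pow_left₀ hε.le (hc i) 2, sq_abs (c i), sq_nonneg (c j),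
      dist_nonneg (x := T (u i)) (y := T (u j))]
  obtain ⟨K, hK, hTK⟩ := hT.image_closedBall_subset_compact 1
  obtain ⟨y, -, φ, hφ, hy⟩ :=
    hK.tendsto_subseq fun n => hTK ⟨u n, by simp [hu.1 n], rfl⟩
  obtain ⟨N, hN⟩ := Metric.cauchySeq_iff'.mp hy.cauchySeq ε hε
  exact (hN (N + 1) N.le_succ).not_ge (hsep (hφ.injective.ne N.succ_ne_self))

variable [CompleteSpace H]

theorem ContinuousLinearMap.IsPositive.exists_norm_eq_one_apply_eq_norm_smul {T : H →L[ℝ] H}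
    (hT : T.IsPositive) (hTc : IsCompactOperator T) (hT0 : T ≠ 0) :
    ∃ u, ‖u‖ = 1 ∧ T u = ‖T‖ • u := by
  have hradius : spectralRadius ℝ T = ‖T‖₊ := T.spectralRadius_eq_nnnorm hT.isSelfAdjoint
  have hnonempty : (spectrum ℝ T).Nonempty := by
    by_contra h
    rw [Set.not_nonempty_iff_eq_empty] at h
    simp only [spectralRadius, h, Set.mem_empty_iff_false, iSup_false, ciSup_const,
      ENNReal.bot_eq_zero, ENNReal.zero_eq_coe] at hradius
    exact hT0 (nnnorm_eq_zero.mp hradius.symm)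
  obtain ⟨μ, hμ, hμT⟩ := spectrum.exists_nnnorm_eq_spectralRadius_of_nonempty hnonempty
  rw [hradius, ENNReal.coe_inj, ← NNReal.coe_inj, coe_nnnorm, coe_nnnorm] at hμT
  have hμ0 : μ ≠ 0 := by
    rintro rfl
    exact hT0 (norm_eq_zero.mp (by simpa using hμT.symm))
  obtain ⟨x, hx⟩ := ((hTc.hasEigenvalue_iff_mem_spectrum hμ0).mpr hμ).exists_hasEigenvector
  have hTx : T x = μ • x := hx.apply_eq_smul
  have hx0 : x ≠ 0 := hx.2
  have hμnonneg : 0 ≤ μ := by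
    have h := hT.re_inner_nonneg_left x
    rw [hTx, RCLike.re_to_real, real_inner_smul_left, real_inner_self_eq_norm_sq] at h
    exact nonneg_of_mul_nonneg_left h (by positivity)
  refine ⟨‖x‖⁻¹ • x, norm_smul_inv_norm hx0, ?_⟩
  rw [map_smul, hTx, ← hμT, Real.norm_of_nonneg hμnonneg, smul_comm]

theorem ContinuousLinearMap.topologicalClosure_span_eq_orthogonal_ker {ι : Type*}
    {T : H →L[ℝ] H} (hT : T.IsSymmetric) {e : ι → H} {c : ι → ℝ} (hc : ∀ i, c i ≠ 0)
    (he : ∀ i, T (e i) = c i • e i)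
    (hker : (span ℝ (Set.range e))ᗮ ≤ LinearMap.ker (T : H →ₗ[ℝ] H)) :
    (span ℝ (Set.range e)).topologicalClosure = (LinearMap.ker (T : H →ₗ[ℝ] H))ᗮ := by
  refine le_antisymm (topologicalClosure_minimal _ ?_ (isClosed_orthogonal _)) ?_
  · refine span_le.mpr (Set.range_subset_iff.mpr fun i =>
      (mem_orthogonal _ _).mpr fun y hy => ?_)
    have h : c i * ⟪y, e i⟫ = 0 := by
      rw [← real_inner_smul_right, ← he, ← ContinuousLinearMap.coe_coe, ← hT,
        LinearMap.mem_ker.mp hy, inner_zero_left]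
    exact (mul_eq_zero.mp h).resolve_left (hc i)
  · simpa only [orthogonal_orthogonal_eq_closure] using orthogonal_le hker

end CompactOperator

namespace Deflation

variable {H : Type*} [NormedAddCommGroup H] [InnerProductSpace ℝ H]

structure IsTopEigenpair (T : H →L[ℝ] H) (E : Submodule ℝ H) (u : H) (c : ℝ) : Prop where
  mem : u ∈ E
  norm_eq_one : ‖u‖ = 1
  pos : 0 < c
  apply_eq : T u = c • u
  norm_apply_le : ∀ x ∈ E, ‖T x‖ ≤ c * ‖x‖

theorem exists_isTopEigenpair [CompleteSpace H] {T : H →L[ℝ] H}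
    (hT : T.IsPositive) (hTc : IsCompactOperator T) {E : Submodule ℝ H}
    (hE : IsClosed (E : Set H)) (hTE : ∀ x ∈ E, T x ∈ E) (hne : ∃ x ∈ E, T x ≠ 0) :
    ∃ p : H × ℝ, IsTopEigenpair T E p.1 p.2 := by
  have : CompleteSpace E := hE.completeSpace_coe
  set S := T.restrict hTE
  have hS : S.IsPositive := ⟨fun x y => hT.isSymmetric x y, fun x => hT.2 x⟩
  have hS0 : S ≠ 0 := by
    obtain ⟨x, hx, hTx⟩ := hne
    exact fun h => hTx (by simpa [S] using congrArg Subtype.val (DFunLike.congr_fun h ⟨x, hx⟩))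
  have hSpos : 0 < ‖S‖ :=
    (norm_nonneg S).lt_of_ne fun h => hS0 (S.opNorm_zero_iff.mp h.symm)
  obtain ⟨u, hu, hSu⟩ := hS.exists_norm_eq_one_apply_eq_norm_smul (hTc.restrict' hTE) hS0
  exact ⟨(u, ‖S‖), u.2, hu, hSpos, congrArg Subtype.val hSu,
    fun x hx => S.le_opNorm ⟨x, hx⟩⟩

open Classical in
/-- Junk value `0` when no top eigenpair exists; for compact positive `T` on closed invariant `E`
this happens exactly when `T` vanishes on `E`. -/
noncomputable def topEigenpair (T : H →L[ℝ] H) (E : Submodule ℝ H) : H × ℝ :=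
  if h : ∃ p : H × ℝ, IsTopEigenpair T E p.1 p.2 then h.choose else 0

noncomputable def residual (T : H →L[ℝ] H) : ℕ → Submodule ℝ H
  | 0 => ⊤
  | n + 1 => residual T n ⊓ (ℝ ∙ (topEigenpair T (residual T n)).1)ᗮ

noncomputable def eigvec (T : H →L[ℝ] H) (n : ℕ) : H := (topEigenpair T (residual T n)).1

noncomputable def eigval (T : H →L[ℝ] H) (n : ℕ) : ℝ := (topEigenpair T (residual T n)).2

variable {T : H →L[ℝ] H}

theorem isTopEigenpair_of_exists {n : ℕ}
    (h : ∃ p : H × ℝ, IsTopEigenpair T (residual T n) p.1 p.2) :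
    IsTopEigenpair T (residual T n) (eigvec T n) (eigval T n) := by
  unfold eigvec eigval topEigenpair
  rw [dif_pos h]
  exact h.choose_spec

theorem isTopEigenpair_or_eq_zero (n : ℕ) :
    IsTopEigenpair T (residual T n) (eigvec T n) (eigval T n) ∨
      eigvec T n = 0 ∧ eigval T n = 0 := by
  by_cases h : ∃ p : H × ℝ, IsTopEigenpair T (residual T n) p.1 p.2
  · exact Or.inl (isTopEigenpair_of_exists h)
  · unfold eigvec eigval topEigenpair
    rw [dif_neg h]
    exact Or.inr ⟨rfl, rfl⟩

theorem isTopEigenpair_of_pos {n : ℕ} (h : 0 < eigval T n) :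
    IsTopEigenpair T (residual T n) (eigvec T n) (eigval T n) :=
  (isTopEigenpair_or_eq_zero n).resolve_right fun h0 => h.ne' h0.2

theorem eigval_nonneg (n : ℕ) : 0 ≤ eigval T n :=
  (isTopEigenpair_or_eq_zero n).elim (fun h => h.pos.le) fun h => h.2.ge

theorem eigvec_eq_zero_of_not_pos {n : ℕ} (h : ¬ 0 < eigval T n) : eigvec T n = 0 :=
  ((isTopEigenpair_or_eq_zero n).resolve_left fun hp => h hp.pos).1

theorem apply_eigvec (n : ℕ) : T (eigvec T n) = eigval T n • eigvec T n := by
  rcases isTopEigenpair_or_eq_zero (T := T) n with h | ⟨h, -⟩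
  · exact h.apply_eq
  · simp [h]

theorem eigvec_mem_residual (n : ℕ) : eigvec T n ∈ residual T n := by
  rcases isTopEigenpair_or_eq_zero (T := T) n with h | ⟨h, -⟩
  · exact h.mem
  · simp [h]

theorem residual_succ (n : ℕ) : residual T (n + 1) = residual T n ⊓ (ℝ ∙ eigvec T n)ᗮ := rfl

theorem residual_antitone : Antitone (residual T) :=
  antitone_nat_of_succ_le fun n => by rw [residual_succ]; exact inf_le_left

theorem inner_eigvec_eq_zero {i j : ℕ} (hij : i < j) : ⟪eigvec T i, eigvec T j⟫ = 0 := by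
  have h := residual_antitone hij (eigvec_mem_residual (T := T) j)
  rw [residual_succ, mem_inf, mem_orthogonal_singleton_iff_inner_right] at h
  exact h.2

theorem orthonormal_eigvec {p : ℕ → Prop} (hp : ∀ n, p n → 0 < eigval T n) :
    Orthonormal ℝ (fun n : {n // p n} => eigvec T n) := by
  refine ⟨fun n => (isTopEigenpair_of_pos (hp n n.2)).norm_eq_one, fun i j hij => ?_⟩
  rcases lt_or_gt_of_ne (Subtype.coe_ne_coe.mpr hij) with h | h
  · exact inner_eigvec_eq_zero h
  · rw [real_inner_comm]; exact inner_eigvec_eq_zero h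

theorem isClosed_residual (n : ℕ) : IsClosed (residual T n : Set H) := by
  induction n with
  | zero => exact isClosed_univ
  | succ n ih => exact ih.inter (isClosed_orthogonal _)

theorem apply_mem_residual (hT : T.IsSymmetric) {n : ℕ} {x : H} (hx : x ∈ residual T n) :
    T x ∈ residual T n := by
  induction n generalizing x with
  | zero => exact mem_top
  | succ n ih =>
    rw [residual_succ, mem_inf, mem_orthogonal_singleton_iff_inner_right] at hx ⊢
    refine ⟨ih hx.1, ?_⟩
    calc ⟪eigvec T n, T x⟫ = ⟪T (eigvec T n), x⟫ := (hT _ _).symm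
      _ = 0 := by rw [apply_eigvec, real_inner_smul_left, hx.2, mul_zero]

variable [CompleteSpace H] (hT : T.IsPositive) (hTc : IsCompactOperator T)
include hT hTc

theorem eigval_pos_of_apply_ne_zero {n : ℕ} {x : H} (hx : x ∈ residual T n) (hTx : T x ≠ 0) :
    0 < eigval T n :=
  (isTopEigenpair_of_exists (exists_isTopEigenpair hT hTc (isClosed_residual n)
    (fun _ => apply_mem_residual hT.isSymmetric) ⟨x, hx, hTx⟩)).pos

theorem norm_apply_le {n : ℕ} {x : H} (hx : x ∈ residual T n) :
    ‖T x‖ ≤ eigval T n * ‖x‖ := by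
  by_cases hTx : T x = 0
  · rw [hTx, norm_zero]
    exact mul_nonneg (eigval_nonneg n) (norm_nonneg x)
  · exact (isTopEigenpair_of_pos (eigval_pos_of_apply_ne_zero hT hTc hx hTx)).norm_apply_le x hx

theorem antitone_eigval : Antitone (eigval T) := by
  intro i j hij
  by_cases hpos : 0 < eigval T j
  · have hp := isTopEigenpair_of_pos hpos
    have h := norm_apply_le hT hTc (residual_antitone hij (eigvec_mem_residual (T := T) j))
    rwa [hp.apply_eq, norm_smul, hp.norm_eq_one, mul_one, mul_one,
      Real.norm_of_nonneg hpos.le] at h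
  · exact (not_lt.mp hpos).trans (eigval_nonneg i)

theorem tendsto_eigval : Tendsto (eigval T) atTop (𝓝 0) := by
  refine tendsto_order.2
    ⟨fun a ha => Eventually.of_forall fun n => ha.trans_le (eigval_nonneg n), fun ε hε => ?_⟩
  obtain ⟨m, hm⟩ : ∃ m, eigval T m < ε := by
    by_contra! hge
    have hpos n : 0 < eigval T n := hε.trans_le (hge n)
    have hortho : Orthonormal ℝ (eigvec T) :=
      (orthonormal_eigvec (p := fun n => 0 < eigval T n) fun _ h => h).comp
        (fun n => ⟨n, hpos n⟩) fun _ _ h => congrArg Subtype.val h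
    obtain ⟨n, hn⟩ := hTc.exists_abs_lt_of_orthonormal hortho apply_eigvec hε
    exact (hge n).not_gt ((le_abs_self _).trans_lt hn)
  exact eventually_atTop.2 ⟨m, fun n hn => (antitone_eigval hT hTc hn).trans_lt hm⟩

theorem apply_eq_zero_of_forall_inner_eigvec {x : H} (hx : ∀ n, ⟪eigvec T n, x⟫ = 0) :
    T x = 0 := by
  have hmem n : x ∈ residual T n := by
    induction n with
    | zero => exact mem_top
    | succ n ih => exact mem_inf.mpr ⟨ih, mem_orthogonal_singleton_iff_inner_right.mpr (hx n)⟩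
  have hlim : Tendsto (fun n => eigval T n * ‖x‖) atTop (𝓝 0) := by
    simpa using (tendsto_eigval hT hTc).mul_const ‖x‖
  exact norm_le_zero_iff.mp
    (ge_of_tendsto hlim (Eventually.of_forall fun n => norm_apply_le hT hTc (hmem n)))

theorem topologicalClosure_span_eigvec {p : ℕ → Prop} (hp : ∀ n, p n ↔ 0 < eigval T n) :
    (span ℝ (Set.range fun n : {n // p n} => eigvec T n)).topologicalClosure =
      (LinearMap.ker (T : H →ₗ[ℝ] H))ᗮ := by
  refine T.topologicalClosure_span_eq_orthogonal_ker hT.isSymmetric (fun n => ((hp n).mp n.2).ne')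
    (fun n => apply_eigvec n) fun x hx => apply_eq_zero_of_forall_inner_eigvec hT hTc fun n => ?_
  by_cases hn : 0 < eigval T n
  · exact mem_orthogonal_span_range_iff.mp hx ⟨n, (hp n).mpr hn⟩
  · rw [eigvec_eq_zero_of_not_pos hn, inner_zero_left]

end Deflation

section SingularSystem

variable {U V ι : Type*} [NormedAddCommGroup U] [InnerProductSpace ℝ U] [CompleteSpace U]
  [NormedAddCommGroup V] [InnerProductSpace ℝ V] (A : U →L[ℝ] V)

namespace ContinuousLinearMap

theorem hasSum_inner_smul_apply {u : ι → U} (hu : Orthonormal ℝ u)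
    (hspan : (span ℝ (Set.range u)).topologicalClosure = (LinearMap.ker (A : U →ₗ[ℝ] V))ᗮ) (x : U) :
    HasSum (fun i => ⟪u i, x⟫ • A (u i)) (A x) := by
  set K := LinearMap.ker (A : U →ₗ[ℝ] V)
  have h := A.hasSum (hu.hasSum_inner_smul_starProjection x)
  simp only [map_smul, hspan] at h
  convert h using 1
  have hx : x - Kᗮ.starProjection x ∈ Kᗮᗮ := Kᗮ.sub_starProjection_mem_orthogonal x
  rw [orthogonal_orthogonal_eq_closure, A.isClosed_ker.submodule_topologicalClosure_eq,
    LinearMap.mem_ker, map_sub, sub_eq_zero] at hx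
  exact hx

theorem topologicalClosure_span_inv_smul_apply {u : ι → U} (hu : Orthonormal ℝ u) {s : ι → ℝ}
    (hs : ∀ i, s i ≠ 0)
    (hspan : (span ℝ (Set.range u)).topologicalClosure = (LinearMap.ker (A : U →ₗ[ℝ] V))ᗮ) :
    (span ℝ (Set.range fun i => (s i)⁻¹ • A (u i))).topologicalClosure =
      (LinearMap.range (A : U →ₗ[ℝ] V)).topologicalClosure := by
  refine le_antisymm (topologicalClosure_minimal _ ?_ (isClosed_topologicalClosure _))
    (topologicalClosure_minimal _ ?_ (isClosed_topologicalClosure _))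
  · refine span_le.mpr (Set.range_subset_iff.mpr fun i => le_topologicalClosure _ ?_)
    exact ⟨(s i)⁻¹ • u i, map_smul _ _ _⟩
  · rintro _ ⟨x, rfl⟩
    refine (isClosed_topologicalClosure _).mem_of_tendsto (A.hasSum_inner_smul_apply hu hspan x)
      (Eventually.of_forall fun F => sum_mem fun i _ => le_topologicalClosure _ ?_)
    rw [← smul_inv_smul₀ (hs i) (A (u i)), smul_smul]
    exact smul_mem _ _ (subset_span ⟨i, rfl⟩)

variable [CompleteSpace V]

theorem adjoint_inv_smul_apply {x : U} {s : ℝ} (hs : s ≠ 0)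
    (hx : adjoint A (A x) = s ^ 2 • x) : adjoint A (s⁻¹ • A x) = s • x := by
  rw [map_smul, hx, smul_smul, sq, inv_mul_cancel_left₀ hs]

theorem orthonormal_inv_smul_apply {u : ι → U} (hu : Orthonormal ℝ u) {s : ι → ℝ}
    (hs : ∀ i, s i ≠ 0) (hAu : ∀ i, adjoint A (A (u i)) = s i ^ 2 • u i) :
    Orthonormal ℝ (fun i => (s i)⁻¹ • A (u i)) := by
  classical
  rw [orthonormal_iff_ite] at hu ⊢
  intro i j
  rw [real_inner_smul_left, real_inner_smul_right, ← adjoint_inner_right, hAu,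
    real_inner_smul_right, hu]
  split_ifs with h
  · subst h
    have := hs i
    field_simp
  · simp

end ContinuousLinearMap

end SingularSystem

open ContinuousLinearMap Deflation

theorem stmt_4_general {U V : Type*}
    [NormedAddCommGroup U] [InnerProductSpace ℝ U] [CompleteSpace U]
    [NormedAddCommGroup V] [InnerProductSpace ℝ V] [CompleteSpace V]
    (A : U →L[ℝ] V) (hA : IsCompactOperator (⇑A)) :
    ∃ (N : ℕ∞) (σ : ℕ → ℝ) (uu : ℕ → U) (vv : ℕ → V),
      (∀ i : ℕ, (i : ℕ∞) < N → 0 < σ i) ∧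
      (∀ i j : ℕ, i ≤ j → (j : ℕ∞) < N → σ j ≤ σ i) ∧
      (N = ⊤ → Filter.Tendsto σ Filter.atTop (𝓝 0)) ∧
      Orthonormal ℝ (fun i : {i : ℕ // (i : ℕ∞) < N} => uu i.1) ∧
      Orthonormal ℝ (fun i : {i : ℕ // (i : ℕ∞) < N} => vv i.1) ∧
      (Submodule.span ℝ
          (Set.range (fun i : {i : ℕ // (i : ℕ∞) < N} => uu i.1))).topologicalClosure =
        (LinearMap.ker (A : U →ₗ[ℝ] V))ᗮ ∧
      (Submodule.span ℝ
          (Set.range (fun i : {i : ℕ // (i : ℕ∞) < N} => vv i.1))).topologicalClosure =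
        (LinearMap.range (A : U →ₗ[ℝ] V)).topologicalClosure ∧
      (∀ i : ℕ, (i : ℕ∞) < N → A (uu i) = σ i • vv i) ∧
      (∀ i : ℕ, (i : ℕ∞) < N → (ContinuousLinearMap.adjoint A) (vv i) = σ i • uu i) ∧
      (∀ u : U, HasSum
        (fun i : {i : ℕ // (i : ℕ∞) < N} => (σ i.1 * ⟪u, uu i.1⟫) • vv i.1) (A u)) := by
  set T := adjoint A ∘L A
  have hT : T.IsPositive := A.isPositive_adjoint_comp_self
  have hTc : IsCompactOperator T := hA.clm_comp (adjoint A)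
  obtain ⟨N, hN⟩ := ENat.exists_coe_lt_iff_of_antitone (P := fun n => 0 < eigval T n)
    fun i j hij h => h.trans_le (antitone_eigval hT hTc hij)
  set σ := fun n => √(eigval T n)
  have hσ (i : {i : ℕ // (i : ℕ∞) < N}) : σ i ≠ 0 := (Real.sqrt_pos.mpr ((hN i).mp i.2)).ne'
  have hTu n : adjoint A (A (eigvec T n)) = σ n ^ 2 • eigvec T n := by
    rw [Real.sq_sqrt (eigval_nonneg n)]; exact apply_eigvec (T := T) n
  have hu : Orthonormal ℝ (fun i : {i : ℕ // (i : ℕ∞) < N} => eigvec T i) :=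
    orthonormal_eigvec fun n => (hN n).mp
  have hspan := topologicalClosure_span_eigvec hT hTc hN
  rw [A.ker_adjoint_comp_self] at hspan
  refine ⟨N, σ, eigvec T, fun n => (σ n)⁻¹ • A (eigvec T n),
    fun i hi => Real.sqrt_pos.mpr ((hN i).mp hi),
    fun i j hij _ => Real.sqrt_le_sqrt (antitone_eigval hT hTc hij),
    fun _ => by simpa using (tendsto_eigval hT hTc).sqrt, hu,
    A.orthonormal_inv_smul_apply hu hσ fun i => hTu i, hspan,
    A.topologicalClosure_span_inv_smul_apply hu hσ hspan,
    fun i hi => (smul_inv_smul₀ (hσ ⟨i, hi⟩) _).symm,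
    fun i hi => A.adjoint_inv_smul_apply (hσ ⟨i, hi⟩) (hTu i), fun x => ?_⟩
  convert A.hasSum_inner_smul_apply hu hspan x using 2 with i
  rw [smul_smul, mul_comm (σ i), mul_assoc, mul_inv_cancel₀ (hσ i), mul_one, real_inner_comm]

/-- Singular value decomposition of a nonzero compact operator between real Hilbert
spaces: there exist `N ∈ ℕ ∪ {∞}`, a nonincreasing (null if `N = ∞`) sequence of positive
singular values `σ_i`, an orthonormal family `(u_i)_{i<N}` with closed span `ker(A)ᗮ` and
an orthonormal family `(v_i)_{i<N}` with closed span `closure (range A)`, such that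
`A u_i = σ_i v_i`, `A* v_i = σ_i u_i` and `A u = Σ_{i<N} σ_i ⟨u, u_i⟩ v_i` for all `u`. -/
theorem stmt_4 {U V : Type*}
    [NormedAddCommGroup U] [InnerProductSpace ℝ U] [CompleteSpace U]
    [NormedAddCommGroup V] [InnerProductSpace ℝ V] [CompleteSpace V]
    (A : U →L[ℝ] V) (hA : IsCompactOperator (⇑A)) (hne : A ≠ 0) :
    ∃ (N : ℕ∞) (σ : ℕ → ℝ) (uu : ℕ → U) (vv : ℕ → V),
      (∀ i : ℕ, (i : ℕ∞) < N → 0 < σ i) ∧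
      (∀ i j : ℕ, i ≤ j → (j : ℕ∞) < N → σ j ≤ σ i) ∧
      (N = ⊤ → Filter.Tendsto σ Filter.atTop (𝓝 0)) ∧
      Orthonormal ℝ (fun i : {i : ℕ // (i : ℕ∞) < N} => uu i.1) ∧
      Orthonormal ℝ (fun i : {i : ℕ // (i : ℕ∞) < N} => vv i.1) ∧
      (Submodule.span ℝ
          (Set.range (fun i : {i : ℕ // (i : ℕ∞) < N} => uu i.1))).topologicalClosure =
        (LinearMap.ker (A : U →ₗ[ℝ] V))ᗮ ∧
      (Submodule.span ℝ
          (Set.range (fun i : {i : ℕ // (i : ℕ∞) < N} => vv i.1))).topologicalClosure =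
        (LinearMap.range (A : U →ₗ[ℝ] V)).topologicalClosure ∧
      (∀ i : ℕ, (i : ℕ∞) < N → A (uu i) = σ i • vv i) ∧
      (∀ i : ℕ, (i : ℕ∞) < N → (ContinuousLinearMap.adjoint A) (vv i) = σ i • uu i) ∧
      (∀ u : U, HasSum
        (fun i : {i : ℕ // (i : ℕ∞) < N} => (σ i.1 * ⟪u, uu i.1⟫) • vv i.1) (A u)) :=
  stmt_4_general A hA
end

section
/- Let U and V be real Hilbert spaces, A : U → V a compact bounded linear operator with singular system ((σ_i, u_i, v_i))_{i∈ℕ}, where (v_i) is an orthonormal basis of the closure of range(A), and let f belong to the closure of range(A). Then f ∈ range(A) if and only if the Picard criterion Σ_{i=1}^∞ |⟨f, v_i⟩|² / σ_i² < ∞ is satisfied. -/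
open scoped Topology RealInnerProductSpace InnerProductSpace
open Filter

/-! Both directions rest on the coefficient identity `⟪A w, v_i⟫ = σ_i ⟪w, u_i⟫`, which follows
from `A* v_i = σ_i u_i`. If `f = A w`, the Picard series is `Σ ⟪w, u_i⟫²`, finite by Bessel's
inequality. Conversely, if it converges, the Riesz–Fischer theorem yields `w` with
`⟪w, u_i⟫ = ⟪f, v_i⟫ / σ_i`; then `A w` and `f` have the same coefficients against `(v_i)`, and
both lie in the closed span of `(v_i)`, so they coincide. -/

theorem Orthonormal.exists_inner_eq_of_summable_sq {𝕜 E ι : Type*} [RCLike 𝕜]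
    [NormedAddCommGroup E] [InnerProductSpace 𝕜 E] [CompleteSpace E] {u : ι → E}
    (hu : Orthonormal 𝕜 u) {c : ι → 𝕜} (hc : Summable fun i => ‖c i‖ ^ 2) :
    ∃ w : E, ∀ j, ⟪u j, w⟫_𝕜 = c j := by
  classical
  have hsum : Summable fun i => c i • u i := by
    simpa using (hu.orthogonalFamily.summable_iff_norm_sq_summable c).mpr hc
  refine ⟨∑' i, c i • u i, fun j => ?_⟩
  rw [← innerSL_apply_apply, (innerSL 𝕜 (u j)).map_tsum hsum]
  simp [orthonormal_iff_ite.mp hu, eq_comm (a := j)]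

theorem eq_of_forall_inner_eq_of_mem_closure_span {𝕜 E ι : Type*} [RCLike 𝕜]
    [NormedAddCommGroup E] [InnerProductSpace 𝕜 E] {v : ι → E} {x y : E}
    (hx : x ∈ (Submodule.span 𝕜 (Set.range v)).topologicalClosure)
    (hy : y ∈ (Submodule.span 𝕜 (Set.range v)).topologicalClosure)
    (h : ∀ i, ⟪x, v i⟫_𝕜 = ⟪y, v i⟫_𝕜) : x = y := by
  set K := (Submodule.span 𝕜 (Set.range v)).topologicalClosure
  have hperp : x - y ∈ Kᗮ := by
    rw [Submodule.orthogonal_closure, Submodule.mem_orthogonal']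
    suffices Submodule.span 𝕜 (Set.range v) ≤ LinearMap.ker (innerₛₗ 𝕜 (x - y)) from
      fun w hw => this hw
    rw [Submodule.span_le]
    rintro - ⟨i, rfl⟩
    simp [h i]
  rw [← sub_eq_zero, ← Submodule.mem_bot 𝕜, ← K.inf_orthogonal_eq_bot]
  exact ⟨K.sub_mem hx hy, hperp⟩

theorem stmt_5_general {U V : Type*}
    [NormedAddCommGroup U] [InnerProductSpace ℝ U] [CompleteSpace U]
    [NormedAddCommGroup V] [InnerProductSpace ℝ V] [CompleteSpace V]
    (A : U →L[ℝ] V)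
    (σ : ℕ → ℝ) (uu : ℕ → U) (vv : ℕ → V)
    (hσpos : ∀ i, 0 < σ i)
    (huON : Orthonormal ℝ uu)
    (hvspan : (Submodule.span ℝ (Set.range vv)).topologicalClosure =
        (LinearMap.range (A : U →ₗ[ℝ] V)).topologicalClosure)
    (hAv : ∀ i, (ContinuousLinearMap.adjoint A) (vv i) = σ i • uu i)
    (f : V) (hf : f ∈ closure (Set.range (⇑A))) :
    f ∈ Set.range (⇑A) ↔ Summable (fun i => ⟪f, vv i⟫ ^ 2 / σ i ^ 2) := by
  have hcoeff (w : U) (i : ℕ) : ⟪A w, vv i⟫ = σ i * ⟪w, uu i⟫ := by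
    rw [← ContinuousLinearMap.adjoint_inner_right, hAv, real_inner_smul_right]
  constructor
  · rintro ⟨w, rfl⟩
    have hbessel := huON.inner_products_summable w
    convert hbessel using 2 with i
    rw [hcoeff, mul_pow, mul_div_cancel_left₀ _ (pow_ne_zero 2 (hσpos i).ne'),
      Real.norm_eq_abs, sq_abs, real_inner_comm]
  · intro hsum
    obtain ⟨w, hw⟩ := huON.exists_inner_eq_of_summable_sq (c := fun i => ⟪f, vv i⟫ / σ i)
      (by simpa [div_pow] using hsum)
    refine ⟨w, eq_of_forall_inner_eq_of_mem_closure_span (𝕜 := ℝ) (v := vv) ?_ ?_ fun i => ?_⟩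
    · exact hvspan ▸ Submodule.le_topologicalClosure _ ⟨w, rfl⟩
    · rwa [hvspan, ← SetLike.mem_coe, Submodule.topologicalClosure_coe]
    · rw [hcoeff, real_inner_comm, hw, mul_div_cancel₀ _ (hσpos i).ne']

/-- Picard criterion: for a compact operator `A` with singular system
`((σ_i, u_i, v_i))_{i∈ℕ}` where `(v_i)` is an orthonormal basis of the closure of the
range of `A`, and `f` in the closure of the range of `A`, one has `f ∈ range A` iff
`Σ_i ⟨f, v_i⟩² / σ_i² < ∞`. -/
theorem stmt_5 {U V : Type*}
    [NormedAddCommGroup U] [InnerProductSpace ℝ U] [CompleteSpace U]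
    [NormedAddCommGroup V] [InnerProductSpace ℝ V] [CompleteSpace V]
    (A : U →L[ℝ] V) (hA : IsCompactOperator (⇑A))
    (σ : ℕ → ℝ) (uu : ℕ → U) (vv : ℕ → V)
    (hσpos : ∀ i, 0 < σ i) (hσanti : Antitone σ)
    (hσ0 : Tendsto σ atTop (𝓝 0))
    (huON : Orthonormal ℝ uu) (hvON : Orthonormal ℝ vv)
    (huspan : (Submodule.span ℝ (Set.range uu)).topologicalClosure = (LinearMap.ker (A : U →ₗ[ℝ] V))ᗮ)
    (hvspan : (Submodule.span ℝ (Set.range vv)).topologicalClosure =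
        (LinearMap.range (A : U →ₗ[ℝ] V)).topologicalClosure)
    (hAu : ∀ i, A (uu i) = σ i • vv i)
    (hAv : ∀ i, (ContinuousLinearMap.adjoint A) (vv i) = σ i • uu i)
    (hrep : ∀ w : U, HasSum (fun i => (σ i * ⟪w, uu i⟫) • vv i) (A w))
    (f : V) (hf : f ∈ closure (Set.range (⇑A))) :
    f ∈ Set.range (⇑A) ↔ Summable (fun i => ⟪f, vv i⟫ ^ 2 / σ i ^ 2) :=
  stmt_5_general A σ uu vv hσpos huON hvspan hAv f hf
end

section
/- (Bakushinskii) Let U and V be real Hilbert spaces, A : U → V a bounded linear operator, D := range(A) + range(A)^⊥, and let A† : D → U denote the Moore–Penrose generalized inverse, i.e. A†f is the unique minimal-norm least-squares solution of Au = f. Suppose there is an index set I, a family (R_α)_{α∈I} of continuous linear operators V → U, and a parameter choice α : V → I depending only on the data, such that for every f ∈ D: lim_{δ→0⁺} sup{ ‖R_{α(g)} g − A†f‖ : g ∈ V, ‖g − f‖ ≤ δ } = 0. Then A† is a bounded linear map on D, and hence extends to a continuous linear operator on all of V. -/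
/-! The normal equations identify the minimal-norm least-squares solution `A† f` as the unique
`u ∈ (ker A)ᗮ` with `A u - f ∈ (range A)ᗮ`. Both conditions are linear in `(f, u)`, so `A†` is
linear on `D`. Taking `g = f` in the convergence hypothesis gives `R_{α(f)} f = A† f` for
`f ∈ D`, and the hypothesis then makes `A†` continuous on `D`. Finally `Dᗮ = 0`, so
`D` is dense and `A†` extends by continuity. -/

open scoped Topology

/-- `u` is a least-squares solution of `A u = f`. -/
def IsLSS {U V : Type*} [NormedAddCommGroup U] [InnerProductSpace ℝ U]
    [NormedAddCommGroup V] [InnerProductSpace ℝ V]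
    (A : U →L[ℝ] V) (f : V) (u : U) : Prop :=
  ‖A u - f‖ = ⨅ w : U, ‖A w - f‖

open Filter

section LeastSquares

variable {U V : Type*} [NormedAddCommGroup U] [InnerProductSpace ℝ U]
  [NormedAddCommGroup V] [InnerProductSpace ℝ V] {A : U →L[ℝ] V}

theorem isLSS_iff_sub_mem_orthogonal_range {f : V} {u : U} :
    IsLSS A f u ↔ A u - f ∈ (LinearMap.range (A : U →ₗ[ℝ] V))ᗮ := by
  set K := LinearMap.range (A : U →ₗ[ℝ] V)
  have hinf : (⨅ w : U, ‖A w - f‖) = ⨅ y : (K : Set V), ‖f - y‖ := by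
    refine Eq.trans ?_
      ((A : U →ₗ[ℝ] V).surjective_rangeRestrict.iInf_comp fun y : K => ‖f - (y : V)‖)
    simp only [LinearMap.codRestrict_apply, ContinuousLinearMap.coe_coe, norm_sub_rev (A _)]
  have hAu : A u ∈ K := ⟨u, rfl⟩
  rw [IsLSS, hinf, norm_sub_rev, K.norm_eq_iInf_iff_real_inner_eq_zero hAu,
    ← Submodule.neg_mem_iff, neg_sub, Submodule.mem_orthogonal']

theorem Submodule.mem_orthogonal_of_forall_norm_le_norm_sub {E : Type*}
    [NormedAddCommGroup E] [InnerProductSpace ℝ E] (K : Submodule ℝ E) {u : E}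
    (h : ∀ k ∈ K, ‖u‖ ≤ ‖u - k‖) : u ∈ Kᗮ := by
  have hinf : ‖u - 0‖ = ⨅ w : (K : Set E), ‖u - w‖ :=
    le_antisymm (le_ciInf fun w => by simpa using h w w.2)
      (ciInf_le ⟨0, by rintro _ ⟨w, rfl⟩; positivity⟩ (⟨0, K.zero_mem⟩ : (K : Set E)))
  rw [K.norm_eq_iInf_iff_real_inner_eq_zero K.zero_mem, sub_zero] at hinf
  exact (K.mem_orthogonal' u).2 hinf

def IsMinNormLSS (A : U →L[ℝ] V) (f : V) (u : U) : Prop :=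
  IsLSS A f u ∧ ∀ w : U, IsLSS A f w → ‖u‖ ≤ ‖w‖

theorem eq_zero_of_mem_orthogonal_ker_of_apply_mem_orthogonal_range {u : U}
    (hu : u ∈ (LinearMap.ker (A : U →ₗ[ℝ] V))ᗮ)
    (hAu : A u ∈ (LinearMap.range (A : U →ₗ[ℝ] V))ᗮ) : u = 0 := by
  have hker : u ∈ LinearMap.ker (A : U →ₗ[ℝ] V) :=
    Submodule.disjoint_def.1 (Submodule.orthogonal_disjoint _) (A u)
      (LinearMap.mem_range_self _ u) hAu
  exact Submodule.disjoint_def.1 (Submodule.orthogonal_disjoint _) u hker hu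

namespace IsMinNormLSS

variable {f : V} {u : U}

theorem sub_mem_orthogonal_range (hu : IsMinNormLSS A f u) :
    A u - f ∈ (LinearMap.range (A : U →ₗ[ℝ] V))ᗮ :=
  isLSS_iff_sub_mem_orthogonal_range.1 hu.1

theorem mem_orthogonal_ker (hu : IsMinNormLSS A f u) :
    u ∈ (LinearMap.ker (A : U →ₗ[ℝ] V))ᗮ := by
  refine Submodule.mem_orthogonal_of_forall_norm_le_norm_sub _ fun k hk => hu.2 _ ?_
  have hAk : A k = 0 := hk
  rw [isLSS_iff_sub_mem_orthogonal_range, map_sub, hAk, sub_zero]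
  exact hu.sub_mem_orthogonal_range

theorem eq_of_mem_orthogonal_ker (hu : IsMinNormLSS A f u) {v : U}
    (hv : v ∈ (LinearMap.ker (A : U →ₗ[ℝ] V))ᗮ)
    (hAv : A v - f ∈ (LinearMap.range (A : U →ₗ[ℝ] V))ᗮ) : u = v := by
  refine sub_eq_zero.1 (eq_zero_of_mem_orthogonal_ker_of_apply_mem_orthogonal_range
    (Submodule.sub_mem _ hu.mem_orthogonal_ker hv) ?_)
  simpa [map_sub] using Submodule.sub_mem _ hu.sub_mem_orthogonal_range hAv

theorem eq_add {g : V} {v w : U} (hu : IsMinNormLSS A f u) (hv : IsMinNormLSS A g v)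
    (hw : IsMinNormLSS A (f + g) w) : w = u + v := by
  refine hw.eq_of_mem_orthogonal_ker
    (Submodule.add_mem _ hu.mem_orthogonal_ker hv.mem_orthogonal_ker) ?_
  have hsum := Submodule.add_mem _ hu.sub_mem_orthogonal_range hv.sub_mem_orthogonal_range
  rwa [map_add, add_sub_add_comm]

theorem eq_smul {w : U} (c : ℝ) (hu : IsMinNormLSS A f u) (hw : IsMinNormLSS A (c • f) w) :
    w = c • u := by
  refine hw.eq_of_mem_orthogonal_ker (Submodule.smul_mem _ c hu.mem_orthogonal_ker) ?_
  have hsmul := Submodule.smul_mem _ c hu.sub_mem_orthogonal_range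
  rwa [smul_sub, ← map_smul] at hsmul

end IsMinNormLSS

theorem isLinearMap_of_isMinNormLSS {D : Submodule ℝ V} {Adag : V → U}
    (hAdag : ∀ f ∈ D, IsMinNormLSS A f (Adag f)) : IsLinearMap ℝ fun f : D => Adag f where
  map_add f g := IsMinNormLSS.eq_add (hAdag f f.2) (hAdag g g.2) (hAdag _ (f + g).2)
  map_smul c f := IsMinNormLSS.eq_smul c (hAdag f f.2) (hAdag _ (c • f).2)

end LeastSquares

theorem continuousOn_of_forall_tendsto_nhds {X Y : Type*} [TopologicalSpace X]
    [TopologicalSpace Y] [T1Space Y] {F G : X → Y} {S : Set X}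
    (h : ∀ x ∈ S, Tendsto G (𝓝 x) (𝓝 (F x))) : ContinuousOn F S := by
  have hGF : Set.EqOn G F S := fun x hx =>
    (specializes_iff_pure.2 ((h x hx).mono_left (pure_le_nhds x))).eq
  exact fun x hx => ((h x hx).mono_left nhdsWithin_le_nhds).congr'
    (eventually_nhdsWithin_of_forall hGF)

theorem Submodule.dense_sup_orthogonal {𝕜 E : Type*} [RCLike 𝕜] [NormedAddCommGroup E]
    [InnerProductSpace 𝕜 E] [CompleteSpace E] (K : Submodule 𝕜 E) :
    Dense ((K ⊔ Kᗮ : Submodule 𝕜 E) : Set E) := by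
  rw [Submodule.dense_iff_topologicalClosure_eq_top, Submodule.topologicalClosure_eq_top_iff,
    ← Submodule.inf_orthogonal, inf_orthogonal_eq_bot]

theorem ContinuousLinearMap.exists_extension_of_dense {𝕜 E F : Type*}
    [NontriviallyNormedField 𝕜] [NormedAddCommGroup E] [NormedSpace 𝕜 E]
    [NormedAddCommGroup F] [NormedSpace 𝕜 F]
    [CompleteSpace F] {p : Submodule 𝕜 E} (hp : Dense (p : Set E)) (L : p →L[𝕜] F) :
    ∃ B : E →L[𝕜] F, ∀ x : p, B x = L x :=
  ⟨L.extend p.subtypeL, L.extend_eq (by simpa [DenseRange] using hp)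
    isUniformEmbedding_subtype_val.isUniformInducing⟩

/-- (Bakushinskii) If the Moore–Penrose inverse `A†` (the map sending `f` in
`D = range(A) + range(A)ᗮ` to the unique minimal-norm least-squares solution) can be
approximated by a family of continuous linear operators `(R_α)` with a parameter choice
`α` depending only on the data `g`, uniformly over `‖g - f‖ ≤ δ` as `δ → 0`, for every
`f ∈ D`, then `A†` extends to a continuous linear operator on all of `V`. -/
theorem stmt_6 {U V : Type*}
    [NormedAddCommGroup U] [InnerProductSpace ℝ U] [CompleteSpace U]
    [NormedAddCommGroup V] [InnerProductSpace ℝ V] [CompleteSpace V]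
    (A : U →L[ℝ] V) (Adag : V → U)
    (hAdag : ∀ f ∈ (LinearMap.range (A : U →ₗ[ℝ] V) + (LinearMap.range (A : U →ₗ[ℝ] V))ᗮ : Submodule ℝ V),
      IsLSS A f (Adag f) ∧ ∀ w : U, IsLSS A f w → ‖Adag f‖ ≤ ‖w‖)
    {I : Type*} (R : I → (V →L[ℝ] U)) (αc : V → I)
    (hconv : ∀ f ∈ (LinearMap.range (A : U →ₗ[ℝ] V) + (LinearMap.range (A : U →ₗ[ℝ] V))ᗮ : Submodule ℝ V),
      ∀ ε > (0 : ℝ), ∃ δ > (0 : ℝ), ∀ g : V, ‖g - f‖ ≤ δ → ‖R (αc g) g - Adag f‖ ≤ ε) :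
    ∃ B : V →L[ℝ] U,
      ∀ f ∈ (LinearMap.range (A : U →ₗ[ℝ] V) + (LinearMap.range (A : U →ₗ[ℝ] V))ᗮ : Submodule ℝ V), B f = Adag f := by
  set D : Submodule ℝ V :=
    LinearMap.range (A : U →ₗ[ℝ] V) + (LinearMap.range (A : U →ₗ[ℝ] V))ᗮ
  have hlin : IsLinearMap ℝ fun f : D => Adag f := isLinearMap_of_isMinNormLSS hAdag
  have hcont : ContinuousOn Adag D := continuousOn_of_forall_tendsto_nhds fun f hf =>
    (Metric.nhds_basis_closedBall.tendsto_iff Metric.nhds_basis_closedBall).2 fun ε hε => by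
      simpa only [Metric.mem_closedBall, dist_eq_norm] using hconv f hf ε hε
  let L : D →L[ℝ] U := ⟨hlin.mk' _, hcont.domRestrict⟩
  obtain ⟨B, hB⟩ :=
    L.exists_extension_of_dense (LinearMap.range (A : U →ₗ[ℝ] V)).dense_sup_orthogonal
  exact ⟨B, fun f hf => hB ⟨f, hf⟩⟩
end

section
/- Let U and V be real Hilbert spaces, A : U → V a bounded linear operator, D := range(A) + range(A)^⊥, and A† : D → U the Moore–Penrose generalized inverse. Let (R_α)_{α>0} be a family of continuous (linear) operators V → U such that R_α f → A†f as α → 0 for every f ∈ D. Then for every fixed f ∈ D there exists an a-priori parameter choice rule α : ℝ_{>0} → ℝ_{>0} with lim_{δ→0} α(δ) = 0 such that lim_{δ→0} sup{ ‖R_{α(δ)} g − A†f‖ : g ∈ V, ‖g − f‖ ≤ δ } = 0; that is, (R_α, α) is a convergent regularization method for Au = f. -/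
/-!
Split `R_α g - A†f = R_α (g - f) + (R_α f - A†f)`: the second term tends to `0` as `α → 0`
by assumption, the first is at most `‖R_α‖ δ`. Along `α_n = 1/(n+1)` it therefore suffices to
use `α_n` only for noise levels `δ ≤ α_n / (‖R_{α_n}‖ + 1)`, which makes `‖R_{α_n}‖ δ ≤ α_n`;
since these thresholds are positive, the index `n` so chosen still tends to `∞` as `δ → 0`.
-/

open scoped Topology
open Filter

lemma ContinuousLinearMap.norm_apply_sub_le {𝕜 E F : Type*} [NontriviallyNormedField 𝕜]
    [SeminormedAddCommGroup E] [NormedSpace 𝕜 E] [SeminormedAddCommGroup F] [NormedSpace 𝕜 F]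
    (T : E →L[𝕜] F) (f g : E) (x : F) :
    ‖T g - x‖ ≤ ‖T‖ * ‖g - f‖ + ‖T f - x‖ :=
  calc ‖T g - x‖ = ‖T (g - f) + (T f - x)‖ := by rw [map_sub, sub_add_sub_cancel]
    _ ≤ ‖T (g - f)‖ + ‖T f - x‖ := norm_add_le _ _
    _ ≤ ‖T‖ * ‖g - f‖ + ‖T f - x‖ := by gcongr; exact T.le_opNorm _

lemma exists_tendsto_atTop_le_of_pos (d : ℕ → ℝ) (hd : ∀ n, 0 < d n) :
    ∃ N : ℝ → ℕ, Tendsto N (𝓝[>] 0) atTop ∧ ∀ᶠ δ in 𝓝[>] 0, δ ≤ d (N δ) := by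
  classical
  have hle : ∀ n, ∀ᶠ δ in 𝓝[>] (0 : ℝ), δ ≤ d n := fun n =>
    nhdsWithin_le_nhds (eventually_le_nhds (hd n))
  have hfloor : Tendsto (fun δ : ℝ => ⌊δ⁻¹⌋₊) (𝓝[>] 0) atTop :=
    tendsto_nat_floor_atTop.comp tendsto_inv_nhdsGT_zero
  refine ⟨fun δ => Nat.findGreatest (fun n => δ ≤ d n) ⌊δ⁻¹⌋₊, ?_, ?_⟩
  · refine tendsto_atTop.2 fun k => ?_
    filter_upwards [hle k, hfloor.eventually_ge_atTop k] with δ hδ hk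
    exact Nat.le_findGreatest hk hδ
  · filter_upwards [hle 0] with δ hδ
    exact Nat.findGreatest_spec (P := fun n => δ ≤ d n) (Nat.zero_le _) hδ

theorem exists_parameter_choice_tendsto {𝕜 E F : Type*} [NontriviallyNormedField 𝕜]
    [SeminormedAddCommGroup E] [NormedSpace 𝕜 E] [SeminormedAddCommGroup F] [NormedSpace 𝕜 F]
    (R : ℝ → E →L[𝕜] F) (f : E) (x : F)
    (hR : Tendsto (fun α => R α f) (𝓝[>] 0) (𝓝 x)) :
    ∃ αr : ℝ → ℝ, (∀ δ, 0 < αr δ) ∧ Tendsto αr (𝓝[>] 0) (𝓝 0) ∧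
      Tendsto (fun δ => ‖R (αr δ)‖ * δ + ‖R (αr δ) f - x‖) (𝓝[>] 0) (𝓝 0) := by
  set β : ℕ → ℝ := fun n => 1 / (n + 1)
  have hβpos : ∀ n, 0 < β n := fun n => by positivity
  have hβ : Tendsto β atTop (𝓝[>] 0) :=
    tendsto_nhdsWithin_iff.2 ⟨tendsto_one_div_add_atTop_nhds_zero_nat, .of_forall hβpos⟩
  obtain ⟨N, hN, hNd⟩ := exists_tendsto_atTop_le_of_pos (fun n => β n / (‖R (β n)‖ + 1))
    fun n => by positivity
  have hα := hβ.comp hN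
  refine ⟨β ∘ N, fun δ => hβpos _, tendsto_nhdsWithin_iff.1 hα |>.1, ?_⟩
  have hnoise : Tendsto (fun δ => ‖R (β (N δ))‖ * δ) (𝓝[>] 0) (𝓝 0) := by
    refine squeeze_zero' ?_ ?_ (tendsto_nhdsWithin_iff.1 hα).1
    · filter_upwards [self_mem_nhdsWithin] with δ (hδ : 0 < δ)
      positivity
    · filter_upwards [hNd] with δ hδ
      have hRpos : 0 < ‖R (β (N δ))‖ + 1 := by positivity
      calc ‖R (β (N δ))‖ * δ ≤ ‖R (β (N δ))‖ * (β (N δ) / (‖R (β (N δ))‖ + 1)) := by gcongr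
        _ = β (N δ) * (‖R (β (N δ))‖ / (‖R (β (N δ))‖ + 1)) := mul_div_left_comm _ _ _
        _ ≤ β (N δ) := mul_le_of_le_one_right (hβpos _).le ((div_le_one hRpos).2 (by linarith))
  have happrox : Tendsto (fun δ => ‖R (β (N δ)) f - x‖) (𝓝[>] 0) (𝓝 0) := by
    simpa using ((hR.comp hα).sub_const x).norm
  simpa using hnoise.add happrox

theorem stmt_7_general {U V : Type*}
    [NormedAddCommGroup U] [InnerProductSpace ℝ U]
    [NormedAddCommGroup V] [InnerProductSpace ℝ V]
    (A : U →L[ℝ] V) (Adag : V → U)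
    (R : ℝ → (V →L[ℝ] U))
    (hptw : ∀ f ∈ (LinearMap.range (A : U →ₗ[ℝ] V) + (LinearMap.range (A : U →ₗ[ℝ] V))ᗮ : Submodule ℝ V),
      Tendsto (fun α => R α f) (𝓝[>] (0 : ℝ)) (𝓝 (Adag f))) :
    ∀ f ∈ (LinearMap.range (A : U →ₗ[ℝ] V) + (LinearMap.range (A : U →ₗ[ℝ] V))ᗮ : Submodule ℝ V),
      ∃ αr : ℝ → ℝ,
        (∀ δ > (0 : ℝ), 0 < αr δ) ∧
        Tendsto αr (𝓝[>] (0 : ℝ)) (𝓝 0) ∧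
        ∀ ε > (0 : ℝ), ∃ δ₀ > (0 : ℝ), ∀ δ : ℝ, 0 < δ → δ ≤ δ₀ →
          ∀ g : V, ‖g - f‖ ≤ δ → ‖R (αr δ) g - Adag f‖ ≤ ε := by
  intro f hf
  obtain ⟨αr, hpos, hα, herr⟩ := exists_parameter_choice_tendsto R f (Adag f) (hptw f hf)
  refine ⟨αr, fun δ _ => hpos δ, hα, fun ε hε => ?_⟩
  obtain ⟨δ₀, hδ₀, hsmall⟩ := (nhdsGT_basis_Ioc (0 : ℝ)).eventually_iff.1
    (herr.eventually (eventually_le_nhds hε))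
  refine ⟨δ₀, hδ₀, fun δ hδ hδδ₀ g hg => ?_⟩
  calc ‖R (αr δ) g - Adag f‖ ≤ ‖R (αr δ)‖ * ‖g - f‖ + ‖R (αr δ) f - Adag f‖ :=
        (R (αr δ)).norm_apply_sub_le f g (Adag f)
    _ ≤ ‖R (αr δ)‖ * δ + ‖R (αr δ) f - Adag f‖ := by gcongr
    _ ≤ ε := hsmall ⟨hδ, hδδ₀⟩

/-- If a family `(R_α)_{α>0}` of continuous linear operators converges pointwise on
`D = range(A) + range(A)ᗮ` to the Moore–Penrose inverse `A†` as `α → 0`, then for every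
`f ∈ D` there is an a-priori parameter choice rule `α(δ) → 0` making `(R_α, α)` a
convergent regularization method for `A u = f`. -/
theorem stmt_7 {U V : Type*}
    [NormedAddCommGroup U] [InnerProductSpace ℝ U] [CompleteSpace U]
    [NormedAddCommGroup V] [InnerProductSpace ℝ V] [CompleteSpace V]
    (A : U →L[ℝ] V) (Adag : V → U)
    (hAdag : ∀ f ∈ (LinearMap.range (A : U →ₗ[ℝ] V) + (LinearMap.range (A : U →ₗ[ℝ] V))ᗮ : Submodule ℝ V),
      IsLSS A f (Adag f) ∧ ∀ w : U, IsLSS A f w → ‖Adag f‖ ≤ ‖w‖)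
    (R : ℝ → (V →L[ℝ] U))
    (hptw : ∀ f ∈ (LinearMap.range (A : U →ₗ[ℝ] V) + (LinearMap.range (A : U →ₗ[ℝ] V))ᗮ : Submodule ℝ V),
      Tendsto (fun α => R α f) (𝓝[>] (0 : ℝ)) (𝓝 (Adag f))) :
    ∀ f ∈ (LinearMap.range (A : U →ₗ[ℝ] V) + (LinearMap.range (A : U →ₗ[ℝ] V))ᗮ : Submodule ℝ V),
      ∃ αr : ℝ → ℝ,
        (∀ δ > (0 : ℝ), 0 < αr δ) ∧
        Tendsto αr (𝓝[>] (0 : ℝ)) (𝓝 0) ∧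
        ∀ ε > (0 : ℝ), ∃ δ₀ > (0 : ℝ), ∀ δ : ℝ, 0 < δ → δ ≤ δ₀ →
          ∀ g : V, ‖g - f‖ ≤ δ → ‖R (αr δ) g - Adag f‖ ≤ ε :=
  stmt_7_general A Adag R hptw
end

section
/- Let U and V be real Hilbert spaces, A : U → V a bounded linear operator, D := range(A) + range(A)^⊥, and A† : D → U the Moore–Penrose generalized inverse. Let (R_α)_{α>0} be a family of continuous linear operators V → U with R_α f → A†f as α → 0 for every f ∈ D, and let α : ℝ_{>0} → ℝ_{>0} be an a-priori parameter choice rule. Then the following are equivalent: (i) for every f ∈ D, lim_{δ→0} sup{ ‖R_{α(δ)} g − A†f‖ : g ∈ V, ‖g − f‖ ≤ δ } = 0 and lim_{δ→0} α(δ) = 0 (i.e. (R_α, α) is a convergent regularization method for every f ∈ D); (ii) lim_{δ→0} α(δ) = 0 and lim_{δ→0} δ · ‖R_{α(δ)}‖ = 0, where ‖R_{α(δ)}‖ denotes the operator norm. -/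
open scoped Topology
open Filter

/-!
Since `A† 0 = 0`, condition (i) at `f = 0` says that `R_{α(δ)}` maps the `δ`-ball into the
`ε`-ball for small `δ`, i.e. `δ ‖R_{α(δ)}‖ ≤ ε`. Conversely, for `‖g - f‖ ≤ δ` the total error
`‖R_{α(δ)} g - A† f‖` is at most the data error `δ ‖R_{α(δ)}‖` plus the approximation error
`‖R_{α(δ)} f - A† f‖`, and the latter tends to `0` because `α(δ) → 0⁺`.
-/

section LeastSquares

variable {U V : Type*} [NormedAddCommGroup U] [InnerProductSpace ℝ U]
  [NormedAddCommGroup V] [InnerProductSpace ℝ V]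

theorem isLSS_iff (A : U →L[ℝ] V) (f : V) (u : U) :
    IsLSS A f u ↔ ∀ w, ‖A u - f‖ ≤ ‖A w - f‖ := by
  refine ⟨fun h w => h ▸ ciInf_le ⟨0, ?_⟩ w, fun h => le_antisymm (le_ciInf h) (ciInf_le ⟨0, ?_⟩ u)⟩
  all_goals rintro _ ⟨w, rfl⟩; exact norm_nonneg _

theorem isLSS_zero_zero (A : U →L[ℝ] V) : IsLSS A 0 0 :=
  (isLSS_iff A 0 0).2 fun w => by simp

theorem eq_zero_of_forall_isLSS_zero_norm_le (A : U →L[ℝ] V) {u : U}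
    (hmin : ∀ w, IsLSS A 0 w → ‖u‖ ≤ ‖w‖) : u = 0 :=
  norm_le_zero_iff.1 (by simpa using hmin 0 (isLSS_zero_zero A))

end LeastSquares

namespace ContinuousLinearMap

variable {E F : Type*} [NormedAddCommGroup E] [NormedSpace ℝ E]
  [NormedAddCommGroup F] [NormedSpace ℝ F]

theorem mul_opNorm_le_of_forall_norm_le {T : E →L[ℝ] F} {δ C : ℝ} (hδ : 0 < δ)
    (hT : ∀ x, ‖x‖ ≤ δ → ‖T x‖ ≤ C) : δ * ‖T‖ ≤ C := by
  have hC : 0 ≤ C := by simpa using hT 0 (by simpa using hδ.le)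
  rw [← le_div_iff₀' hδ]
  refine opNorm_le_of_unit_norm (by positivity) fun x hx => ?_
  rw [le_div_iff₀' hδ]
  simpa [norm_smul, hx, abs_of_pos hδ] using hT (δ • x) (by simp [norm_smul, hx, abs_of_pos hδ])

theorem norm_apply_sub_le_s9 (T : E →L[ℝ] F) (f g : E) (y : F) :
    ‖T g - y‖ ≤ ‖T‖ * ‖g - f‖ + ‖T f - y‖ :=
  calc ‖T g - y‖ = ‖T (g - f) + (T f - y)‖ := by rw [map_sub, sub_add_sub_cancel]
    _ ≤ ‖T (g - f)‖ + ‖T f - y‖ := norm_add_le _ _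
    _ ≤ ‖T‖ * ‖g - f‖ + ‖T f - y‖ := by gcongr; exact le_opNorm T _

end ContinuousLinearMap

theorem exists_pos_forall_le_iff_eventually_nhdsGT_zero {P : ℝ → Prop} :
    (∃ δ₀ > (0 : ℝ), ∀ δ : ℝ, 0 < δ → δ ≤ δ₀ → P δ) ↔ ∀ᶠ δ in 𝓝[>] (0 : ℝ), P δ := by
  simp [(nhdsGT_basis_Ioc (0 : ℝ)).eventually_iff]

theorem tendsto_nhds_zero_of_forall_eventually_le {α : Type*} {l : Filter α} {u : α → ℝ}
    (h₀ : ∀ᶠ x in l, 0 ≤ u x) (h : ∀ ε > 0, ∀ᶠ x in l, u x ≤ ε) : Tendsto u l (𝓝 0) :=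
  tendsto_order.2 ⟨fun _ ha => h₀.mono fun _ hx => ha.trans_le hx,
    fun a ha => (h (a / 2) (half_pos ha)).mono fun _ hx => hx.trans_lt (half_lt_self ha)⟩

theorem stmt_9_general {U V : Type*}
    [NormedAddCommGroup U] [InnerProductSpace ℝ U]
    [NormedAddCommGroup V] [InnerProductSpace ℝ V]
    (A : U →L[ℝ] V) (Adag : V → U)
    (hAdag : ∀ f ∈ (LinearMap.range (A : U →ₗ[ℝ] V) + (LinearMap.range (A : U →ₗ[ℝ] V))ᗮ :
        Submodule ℝ V),
      IsLSS A f (Adag f) ∧ ∀ w : U, IsLSS A f w → ‖Adag f‖ ≤ ‖w‖)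
    (R : ℝ → (V →L[ℝ] U))
    (hptw : ∀ f ∈ (LinearMap.range (A : U →ₗ[ℝ] V) + (LinearMap.range (A : U →ₗ[ℝ] V))ᗮ :
        Submodule ℝ V),
      Tendsto (fun α => R α f) (𝓝[>] (0 : ℝ)) (𝓝 (Adag f)))
    (αr : ℝ → ℝ) (hαr : ∀ δ > (0 : ℝ), 0 < αr δ) :
    ((Tendsto αr (𝓝[>] (0 : ℝ)) (𝓝 0) ∧
      ∀ f ∈ (LinearMap.range (A : U →ₗ[ℝ] V) + (LinearMap.range (A : U →ₗ[ℝ] V))ᗮ :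
          Submodule ℝ V),
        ∀ ε > (0 : ℝ), ∃ δ₀ > (0 : ℝ), ∀ δ : ℝ, 0 < δ → δ ≤ δ₀ →
          ∀ g : V, ‖g - f‖ ≤ δ → ‖R (αr δ) g - Adag f‖ ≤ ε) ↔
      (Tendsto αr (𝓝[>] (0 : ℝ)) (𝓝 0) ∧
        Tendsto (fun δ : ℝ => δ * ‖R (αr δ)‖) (𝓝[>] (0 : ℝ)) (𝓝 0))) := by
  have hD0 := Submodule.zero_mem
    (LinearMap.range (A : U →ₗ[ℝ] V) + (LinearMap.range (A : U →ₗ[ℝ] V))ᗮ)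
  have hAdag0 : Adag 0 = 0 := eq_zero_of_forall_isLSS_zero_norm_le A (hAdag 0 hD0).2
  simp only [exists_pos_forall_le_iff_eventually_nhdsGT_zero]
  refine and_congr_right fun hα => ⟨fun hconv => ?_, fun hnorm f hf ε hε => ?_⟩
  · refine tendsto_nhds_zero_of_forall_eventually_le
      (eventually_mem_nhdsWithin.mono fun δ (hδ : 0 < δ) => by positivity) fun ε hε => ?_
    filter_upwards [hconv 0 hD0 ε hε, self_mem_nhdsWithin] with δ hR (hδ : 0 < δ)
    exact ContinuousLinearMap.mul_opNorm_le_of_forall_norm_le hδ fun g hg => by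
      simpa [hAdag0] using hR g (by simpa using hg)
  · have hα' : Tendsto αr (𝓝[>] 0) (𝓝[>] 0) :=
      tendsto_nhdsWithin_iff.2 ⟨hα, eventually_mem_nhdsWithin.mono hαr⟩
    have happrox : ∀ᶠ δ in 𝓝[>] (0 : ℝ), ‖R (αr δ) f - Adag f‖ ≤ ε / 2 := by
      simpa [dist_eq_norm] using
        ((hptw f hf).comp hα').eventually (Metric.closedBall_mem_nhds _ (half_pos hε))
    filter_upwards [happrox, hnorm.eventually (eventually_le_nhds (half_pos hε))]
      with δ happrox hdata g hg
    calc ‖R (αr δ) g - Adag f‖ ≤ ‖R (αr δ)‖ * ‖g - f‖ + ‖R (αr δ) f - Adag f‖ :=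
          (R (αr δ)).norm_apply_sub_le_s9 f g (Adag f)
      _ ≤ δ * ‖R (αr δ)‖ + ε / 2 := by
          rw [mul_comm δ]; gcongr
      _ ≤ ε := by linarith

/-- For a family `(R_α)_{α>0}` of continuous linear operators converging pointwise to
`A†` on `D = range(A) + range(A)ᗮ` and an a-priori parameter choice rule
`αr : ℝ_{>0} → ℝ_{>0}`, the pair `(R_α, αr)` is a convergent regularization method for
every `f ∈ D` iff `αr(δ) → 0` and `δ·‖R_{αr(δ)}‖ → 0` as `δ → 0`. -/
theorem stmt_9 {U V : Type*}
    [NormedAddCommGroup U] [InnerProductSpace ℝ U] [CompleteSpace U]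
    [NormedAddCommGroup V] [InnerProductSpace ℝ V] [CompleteSpace V]
    (A : U →L[ℝ] V) (Adag : V → U)
    (hAdag : ∀ f ∈ (LinearMap.range (A : U →ₗ[ℝ] V) + (LinearMap.range (A : U →ₗ[ℝ] V))ᗮ :
        Submodule ℝ V),
      IsLSS A f (Adag f) ∧ ∀ w : U, IsLSS A f w → ‖Adag f‖ ≤ ‖w‖)
    (R : ℝ → (V →L[ℝ] U))
    (hptw : ∀ f ∈ (LinearMap.range (A : U →ₗ[ℝ] V) + (LinearMap.range (A : U →ₗ[ℝ] V))ᗮ :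
        Submodule ℝ V),
      Tendsto (fun α => R α f) (𝓝[>] (0 : ℝ)) (𝓝 (Adag f)))
    (αr : ℝ → ℝ) (hαr : ∀ δ > (0 : ℝ), 0 < αr δ) :
    ((Tendsto αr (𝓝[>] (0 : ℝ)) (𝓝 0) ∧
      ∀ f ∈ (LinearMap.range (A : U →ₗ[ℝ] V) + (LinearMap.range (A : U →ₗ[ℝ] V))ᗮ :
          Submodule ℝ V),
        ∀ ε > (0 : ℝ), ∃ δ₀ > (0 : ℝ), ∀ δ : ℝ, 0 < δ → δ ≤ δ₀ →
          ∀ g : V, ‖g - f‖ ≤ δ → ‖R (αr δ) g - Adag f‖ ≤ ε) ↔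
      (Tendsto αr (𝓝[>] (0 : ℝ)) (𝓝 0) ∧
        Tendsto (fun δ : ℝ => δ * ‖R (αr δ)‖) (𝓝[>] (0 : ℝ)) (𝓝 0))) :=
  stmt_9_general A Adag hAdag R hptw αr hαr
end

section
/- Let J : ℝⁿ → ℝ be convex and differentiable with L-Lipschitz continuous gradient (L > 0), and suppose the set S of global minimizers of J is nonempty. Let (u^k) be the gradient descent iterates u^{k+1} = u^k − τ ∇J(u^k) from an arbitrary initial point u^0. (i) If τ = 1/L, then for every u* ∈ S and every k ≥ 1, J(u^k) − J(u*) ≤ ‖u^0 − u*‖² / (2τk). (ii) If in addition J is ν-strongly convex for some ν > 0 and τ < 1/L, then ‖u^k − u*‖² ≤ (1 − ντ)^k ‖u^0 − u*‖² for every k ≥ 0, where u* is the (unique) global minimizer. -/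
/-!
The descent lemma `f y ≤ f x + ⟪∇f x, y - x⟫ + L/2 ‖y - x‖²`, obtained by comparing derivatives
along the segment `[x, y]`, shows that a step of length `τ ≤ 1/L` lowers `f` by at least
`τ/2 ‖∇f‖²`. Together with the first-order convexity inequality this bounds
`2τ (f(u^{k+1}) - f(u*))` by the decrease of `‖u^k - u*‖²`; the values `f(u^k)` decrease, so
summing gives `2τk (f(u^k) - f(u*)) ≤ ‖u⁰ - u*‖²`.

For (ii), strong convexity gives `ν‖x - u*‖² ≤ ⟪∇f x, x - u*⟫` and cocoercivity
(Baillon–Haddad) gives `‖∇f x‖² ≤ L ⟪∇f x, x - u*⟫`, since `∇f u* = 0`. Expanding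
`‖x - τ∇f x - u*‖²` with these two bounds and `τL ≤ 1` yields the contraction factor `1 - ντ`.
-/

open Set InnerProductSpace
open scoped RealInnerProductSpace

theorem nat_mul_le_of_le_sub {a d : ℕ → ℝ} (hdecr : ∀ m, a (m + 1) ≤ a m)
    (hgain : ∀ m, a (m + 1) ≤ d m - d (m + 1)) (hd : ∀ m, 0 ≤ d m) (k : ℕ) :
    k * a k ≤ d 0 := by
  suffices h : ∀ m : ℕ, m * a m + d m ≤ d 0 by linarith [h k, hd k]
  intro m
  induction m with
  | zero => simp
  | succ m ih =>
    push_cast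
    nlinarith [hdecr m, hgain m, (Nat.cast_nonneg m : (0 : ℝ) ≤ m)]

-- For `c < 0` the hypotheses force `a ≡ 0`.
theorem le_pow_mul_of_le_mul {a : ℕ → ℝ} {c : ℝ} (ha : ∀ m, 0 ≤ a m)
    (hstep : ∀ m, a (m + 1) ≤ c * a m) (k : ℕ) : a k ≤ c ^ k * a 0 := by
  rcases le_or_gt 0 c with hc | hc
  · induction k with
    | zero => simp
    | succ k ih =>
      calc a (k + 1) ≤ c * a k := hstep k
        _ ≤ c * (c ^ k * a 0) := by gcongr
        _ = c ^ (k + 1) * a 0 := by ring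
  · have h0 : a 0 = 0 := le_antisymm (by nlinarith [ha 1, hstep 0]) (ha 0)
    have hzero : ∀ m, a m = 0 := by
      intro m
      induction m with
      | zero => exact h0
      | succ m ih => exact le_antisymm (by simpa [ih] using hstep m) (ha _)
    simp [hzero]

variable {E : Type*} [NormedAddCommGroup E] [InnerProductSpace ℝ E]

theorem norm_sub_smul_sub_sq (x a z : E) (τ : ℝ) :
    ‖x - τ • a - z‖ ^ 2 = ‖x - z‖ ^ 2 - 2 * τ * ⟪a, x - z⟫ + τ ^ 2 * ‖a‖ ^ 2 := by
  rw [sub_right_comm, norm_sub_sq_real, norm_smul, mul_pow, Real.norm_eq_abs, sq_abs,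
    real_inner_smul_right, real_inner_comm]
  ring

variable [CompleteSpace E]

theorem HasGradientAt.sub {f₁ f₂ : E → ℝ} {a₁ a₂ x : E} (h₁ : HasGradientAt f₁ a₁ x)
    (h₂ : HasGradientAt f₂ a₂ x) : HasGradientAt (fun z ↦ f₁ z - f₂ z) (a₁ - a₂) x := by
  rw [hasGradientAt_iff_hasFDerivAt, map_sub]
  exact h₁.hasFDerivAt.sub h₂.hasFDerivAt

theorem hasGradientAt_inner_const (a x : E) : HasGradientAt (fun z ↦ ⟪a, z⟫) a x := by
  rw [hasGradientAt_iff_hasFDerivAt]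
  exact (toDual ℝ E a).hasFDerivAt

theorem hasGradientAt_half_mul_norm_sq (c : ℝ) (x : E) :
    HasGradientAt (fun z ↦ c / 2 * ‖z‖ ^ 2) (c • x) x := by
  rw [hasGradientAt_iff_hasFDerivAt]
  refine (((hasStrictFDerivAt_norm_sq x).hasFDerivAt).const_mul (c / 2)).congr_fderiv ?_
  ext v
  simp
  ring

theorem HasGradientAt.hasDerivAt_comp_line {f : E → ℝ} {a x v : E} {t : ℝ}
    (h : HasGradientAt f a (x + t • v)) :
    HasDerivAt (fun s : ℝ ↦ f (x + s • v)) ⟪a, v⟫ t := by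
  have hline : HasDerivAt (fun s : ℝ ↦ x + s • v) v t := by
    simpa using ((hasDerivAt_id t).smul_const v).const_add x
  simpa [Function.comp_def] using h.hasFDerivAt.comp_hasDerivAt t hline

theorem ConvexOn.add_inner_le_of_hasGradientAt {f : E → ℝ} {a x : E}
    (hf : ConvexOn ℝ univ f) (h : HasGradientAt f a x) (y : E) :
    f x + ⟪a, y - x⟫ ≤ f y := by
  have hline : ConvexOn ℝ univ (fun s : ℝ ↦ f (x + s • (y - x))) := by
    simpa [Function.comp_def, AffineMap.lineMap_apply, add_comm] using
      hf.comp_affineMap (AffineMap.lineMap x y)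
  have hslope := hline.le_slope_of_hasDerivAt (mem_univ 0) (mem_univ 1) one_pos
    (HasGradientAt.hasDerivAt_comp_line (x := x) (v := y - x) (t := 0) (by simpa using h))
  simp [slope_def_field] at hslope
  linarith

theorem descent_lemma {f : E → ℝ} {f' : E → E} {L : ℝ} (hf : ∀ x, HasGradientAt f (f' x) x)
    (hlip : ∀ x y, ‖f' x - f' y‖ ≤ L * ‖x - y‖) (x y : E) :
    f y ≤ f x + ⟪f' x, y - x⟫ + L / 2 * ‖y - x‖ ^ 2 := by
  set v := y - x
  set φ : ℝ → ℝ := fun t ↦ f (x + t • v) - t * ⟪f' x, v⟫ - L / 2 * t ^ 2 * ‖v‖ ^ 2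
  have hφ : ∀ t, HasDerivAt φ (⟪f' (x + t • v), v⟫ - ⟪f' x, v⟫ - L * t * ‖v‖ ^ 2) t := by
    intro t
    have hline := HasGradientAt.hasDerivAt_comp_line (x := x) (v := v) (hf (x + t • v))
    have := (hline.sub ((hasDerivAt_id t).mul_const ⟪f' x, v⟫)).sub
      (((hasDerivAt_pow 2 t).const_mul (L / 2)).mul_const (‖v‖ ^ 2))
    exact this.congr_deriv (by simp only [Nat.cast_ofNat]; ring)
  have hφ' : ∀ t ∈ interior (Ici (0 : ℝ)),
      ⟪f' (x + t • v), v⟫ - ⟪f' x, v⟫ - L * t * ‖v‖ ^ 2 ≤ 0 := by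
    intro t ht
    rw [interior_Ici, mem_Ioi] at ht
    have hcs := real_inner_le_norm (f' (x + t • v) - f' x) v
    have hl := hlip (x + t • v) x
    rw [add_sub_cancel_left, norm_smul, Real.norm_of_nonneg ht.le] at hl
    rw [inner_sub_left] at hcs
    nlinarith [norm_nonneg v]
  have hanti : AntitoneOn φ (Ici 0) :=
    antitoneOn_of_hasDerivWithinAt_nonpos (convex_Ici 0)
      (fun t _ ↦ (hφ t).continuousAt.continuousWithinAt)
      (fun t _ ↦ (hφ t).hasDerivWithinAt) hφ'
  have h10 := hanti (mem_Ici.mpr le_rfl) (mem_Ici.mpr zero_le_one) zero_le_one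
  simp [φ, v] at h10
  linarith

theorem HasGradientAt.eq_zero_of_forall_le {f : E → ℝ} {a z : E} (h : HasGradientAt f a z)
    (hmin : ∀ w, f z ≤ f w) : a = 0 := by
  have hloc : IsLocalMin f z := Filter.Eventually.of_forall hmin
  simpa using hloc.hasFDerivAt_eq_zero h.hasFDerivAt

theorem le_sub_of_gradient_step {f : E → ℝ} {f' : E → E} {L : ℝ}
    (hf : ∀ x, HasGradientAt f (f' x) x) (hlip : ∀ x y, ‖f' x - f' y‖ ≤ L * ‖x - y‖)
    (x : E) (τ : ℝ) :
    f (x - τ • f' x) ≤ f x - τ * (1 - L * τ / 2) * ‖f' x‖ ^ 2 := by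
  have h := descent_lemma hf hlip x (x - τ • f' x)
  rw [sub_sub_cancel_left, inner_neg_right, norm_neg, real_inner_smul_right,
    real_inner_self_eq_norm_sq, norm_smul, mul_pow, Real.norm_eq_abs, sq_abs] at h
  linarith

theorem le_of_gradient_step {f : E → ℝ} {f' : E → E} {L τ : ℝ}
    (hf : ∀ x, HasGradientAt f (f' x) x) (hlip : ∀ x y, ‖f' x - f' y‖ ≤ L * ‖x - y‖)
    (hτ : 0 ≤ τ) (hτL : L * τ ≤ 2) (x : E) : f (x - τ • f' x) ≤ f x := by
  have h := le_sub_of_gradient_step hf hlip x τ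
  have hgain : 0 ≤ τ * (1 - L * τ / 2) * ‖f' x‖ ^ 2 :=
    mul_nonneg (mul_nonneg hτ (by linarith)) (sq_nonneg _)
  linarith

theorem le_sub_norm_sq_of_forall_le {f : E → ℝ} {f' : E → E} {L : ℝ} (hL : 0 < L)
    (hf : ∀ x, HasGradientAt f (f' x) x) (hlip : ∀ x y, ‖f' x - f' y‖ ≤ L * ‖x - y‖)
    {z : E} (hmin : ∀ w, f z ≤ f w) (y : E) :
    f z ≤ f y - ‖f' y‖ ^ 2 / (2 * L) := by
  have h := le_sub_of_gradient_step hf hlip y (1 / L)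
  have hcoef : 1 / L * (1 - L * (1 / L) / 2) = 1 / (2 * L) := by field_simp; ring
  rw [hcoef, one_div_mul_eq_div] at h
  linarith [hmin (y - (1 / L) • f' y)]

-- `y ↦ f y - ⟪f' x, y⟫` is convex, minimized at `x`, and its gradient `f' - f' x` is again
-- `L`-Lipschitz, so the previous lemma applies to it.
theorem ConvexOn.add_inner_add_norm_sq_le {f : E → ℝ} {f' : E → E} {L : ℝ} (hL : 0 < L)
    (hconv : ConvexOn ℝ univ f) (hf : ∀ x, HasGradientAt f (f' x) x)
    (hlip : ∀ x y, ‖f' x - f' y‖ ≤ L * ‖x - y‖) (x y : E) :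
    f x + ⟪f' x, y - x⟫ + ‖f' y - f' x‖ ^ 2 / (2 * L) ≤ f y := by
  set φ : E → ℝ := fun z ↦ f z - ⟪f' x, z⟫
  have hφ : ∀ z, HasGradientAt φ (f' z - f' x) z :=
    fun z ↦ (hf z).sub (hasGradientAt_inner_const (f' x) z)
  have hφlip : ∀ z w, ‖(f' z - f' x) - (f' w - f' x)‖ ≤ L * ‖z - w‖ := by
    simpa only [sub_sub_sub_cancel_right] using hlip
  have hφmin : ∀ w, φ x ≤ φ w := by
    intro w
    have h := hconv.add_inner_le_of_hasGradientAt (hf x) w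
    simp only [φ, inner_sub_right] at h ⊢
    linarith
  have h := le_sub_norm_sq_of_forall_le hL hφ hφlip hφmin y
  rw [inner_sub_right]
  linarith

theorem ConvexOn.norm_sq_sub_le_mul_inner {f : E → ℝ} {f' : E → E} {L : ℝ} (hL : 0 < L)
    (hconv : ConvexOn ℝ univ f) (hf : ∀ x, HasGradientAt f (f' x) x)
    (hlip : ∀ x y, ‖f' x - f' y‖ ≤ L * ‖x - y‖) (x y : E) :
    ‖f' x - f' y‖ ^ 2 ≤ L * ⟪f' x - f' y, x - y⟫ := by
  have hxy := hconv.add_inner_add_norm_sq_le hL hf hlip x y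
  have hyx := hconv.add_inner_add_norm_sq_le hL hf hlip y x
  rw [norm_sub_rev] at hxy
  have hsum : ‖f' x - f' y‖ ^ 2 / L ≤ ⟪f' x - f' y, x - y⟫ := by
    have : ⟪f' x - f' y, x - y⟫ = -⟪f' x, y - x⟫ - ⟪f' y, x - y⟫ := by
      rw [inner_sub_left, ← neg_sub x y, inner_neg_right]; ring
    rw [this]
    have : ‖f' x - f' y‖ ^ 2 / L = 2 * (‖f' x - f' y‖ ^ 2 / (2 * L)) := by field_simp
    linarith
  rwa [div_le_iff₀ hL, mul_comm] at hsum

theorem mul_norm_sq_le_inner_of_convexOn_sub {f : E → ℝ} {a b x y : E} {ν : ℝ}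
    (hsc : ConvexOn ℝ univ (fun z ↦ f z - ν / 2 * ‖z‖ ^ 2))
    (hx : HasGradientAt f a x) (hy : HasGradientAt f b y) :
    ν * ‖x - y‖ ^ 2 ≤ ⟪a - b, x - y⟫ := by
  have hxy := hsc.add_inner_le_of_hasGradientAt (hx.sub (hasGradientAt_half_mul_norm_sq ν x)) y
  have hyx := hsc.add_inner_le_of_hasGradientAt (hy.sub (hasGradientAt_half_mul_norm_sq ν y)) x
  have key : ν * ‖x - y‖ ^ 2 - ⟪a - b, x - y⟫
      = ⟪a - ν • x, y - x⟫ + ⟪b - ν • y, x - y⟫ := by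
    rw [← neg_sub x y]
    simp only [inner_neg_right, inner_sub_left, inner_sub_right, real_inner_smul_left,
      norm_sub_sq_real, real_inner_self_eq_norm_sq, real_inner_comm x y]
    ring
  linarith

theorem two_mul_sub_le_of_gradient_step {f : E → ℝ} {f' : E → E} {L τ : ℝ}
    (hconv : ConvexOn ℝ univ f) (hf : ∀ x, HasGradientAt f (f' x) x)
    (hlip : ∀ x y, ‖f' x - f' y‖ ≤ L * ‖x - y‖) (hτ : 0 ≤ τ) (hτL : L * τ ≤ 1) (x z : E) :
    2 * τ * (f (x - τ • f' x) - f z) ≤ ‖x - z‖ ^ 2 - ‖x - τ • f' x - z‖ ^ 2 := by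
  have hdecr := le_sub_of_gradient_step hf hlip x τ
  have hlow := hconv.add_inner_le_of_hasGradientAt (hf x) z
  rw [← neg_sub x z, inner_neg_right] at hlow
  rw [norm_sub_smul_sub_sq]
  nlinarith [mul_nonneg (mul_nonneg hτ hτ) (sq_nonneg ‖f' x‖)]

theorem norm_sub_sq_gradient_step_le {f : E → ℝ} {f' : E → E} {L τ ν : ℝ} (hL : 0 < L)
    (hconv : ConvexOn ℝ univ f) (hsc : ConvexOn ℝ univ (fun z ↦ f z - ν / 2 * ‖z‖ ^ 2))
    (hf : ∀ x, HasGradientAt f (f' x) x) (hlip : ∀ x y, ‖f' x - f' y‖ ≤ L * ‖x - y‖)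
    (hτ : 0 ≤ τ) (hτL : L * τ ≤ 1) {z : E} (hmin : ∀ w, f z ≤ f w) (x : E) :
    ‖x - τ • f' x - z‖ ^ 2 ≤ (1 - ν * τ) * ‖x - z‖ ^ 2 := by
  have hz : f' z = 0 := (hf z).eq_zero_of_forall_le hmin
  have hstrong := mul_norm_sq_le_inner_of_convexOn_sub hsc (hf x) (hf z)
  have hcoco := hconv.norm_sq_sub_le_mul_inner hL hf hlip x z
  rw [hz, sub_zero] at hstrong hcoco
  have hinner : 0 ≤ ⟪f' x, x - z⟫ := by nlinarith [sq_nonneg ‖f' x‖]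
  have hquad : τ ^ 2 * ‖f' x‖ ^ 2 ≤ τ * ⟪f' x, x - z⟫ := by
    calc τ ^ 2 * ‖f' x‖ ^ 2 ≤ τ ^ 2 * (L * ⟪f' x, x - z⟫) := by gcongr
      _ = τ * (L * τ) * ⟪f' x, x - z⟫ := by ring
      _ ≤ τ * 1 * ⟪f' x, x - z⟫ := by gcongr
      _ = τ * ⟪f' x, x - z⟫ := by ring
  rw [norm_sub_smul_sub_sq]
  nlinarith [mul_le_mul_of_nonneg_left hstrong hτ]

theorem stmt_12_general {n : ℕ} (J : EuclideanSpace ℝ (Fin n) → ℝ)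
    (g : EuclideanSpace ℝ (Fin n) → EuclideanSpace ℝ (Fin n))
    (hconv : ConvexOn ℝ Set.univ J)
    (hgrad : ∀ x, HasGradientAt J (g x) x)
    (L : ℝ) (hL : 0 < L)
    (hlip : ∀ x y, ‖g x - g y‖ ≤ L * ‖x - y‖)
    (τ : ℝ) (u : ℕ → EuclideanSpace ℝ (Fin n))
    (hiter : ∀ k : ℕ, u (k + 1) = u k - τ • g (u k)) :
    (τ = 1 / L →
      ∀ ustar, (∀ w, J ustar ≤ J w) → ∀ k : ℕ, 1 ≤ k →
        J (u k) - J ustar ≤ ‖u 0 - ustar‖ ^ 2 / (2 * τ * (k : ℝ))) ∧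
    (∀ ν : ℝ, 0 < ν →
      ConvexOn ℝ Set.univ (fun x => J x - ν / 2 * ‖x‖ ^ 2) →
      0 < τ → τ < 1 / L →
      ∀ ustar, (∀ w, J ustar ≤ J w) → ∀ k : ℕ,
        ‖u k - ustar‖ ^ 2 ≤ (1 - ν * τ) ^ k * ‖u 0 - ustar‖ ^ 2) := by
  constructor
  · rintro rfl ustar - k hk
    have hτ : 0 < 1 / L := by positivity
    have hτL : L * (1 / L) ≤ 1 := by rw [mul_one_div_cancel hL.ne']
    have hbound := nat_mul_le_of_le_sub (a := fun m ↦ 2 * (1 / L) * (J (u m) - J ustar))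
      (d := fun m ↦ ‖u m - ustar‖ ^ 2)
      (fun m ↦ by
        rw [hiter m]
        gcongr
        exact le_of_gradient_step hgrad hlip hτ.le (by linarith) (u m))
      (fun m ↦ by
        simpa only [hiter m] using
          two_mul_sub_le_of_gradient_step hconv hgrad hlip hτ.le hτL (u m) ustar)
      (fun m ↦ sq_nonneg _) k
    have hkpos : (0 : ℝ) < k := by exact_mod_cast hk
    rw [le_div_iff₀ (by positivity)]
    linarith
  · intro ν _ hsc hτ hτL ustar hmin k
    have hτL' : L * τ ≤ 1 := by
      rw [mul_comm]; exact ((lt_div_iff₀ hL).mp (by simpa using hτL)).le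
    refine le_pow_mul_of_le_mul (a := fun m ↦ ‖u m - ustar‖ ^ 2) (fun m ↦ sq_nonneg _)
      (fun m ↦ ?_) k
    rw [hiter m]
    exact norm_sub_sq_gradient_step_le hL hconv hsc hgrad hlip hτ.le hτL' hmin (u m)

/-- Convergence of gradient descent: for convex differentiable `J : ℝⁿ → ℝ` with
`L`-Lipschitz gradient `g` and nonempty set of global minimizers, the iterates
`u^{k+1} = u^k − τ g(u^k)` satisfy (i) for `τ = 1/L`:
`J(u^k) − J(u*) ≤ ‖u⁰ − u*‖²/(2τk)` for `k ≥ 1`, and (ii) if `J` is moreover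
`ν`-strongly convex and `0 < τ < 1/L`: `‖u^k − u*‖² ≤ (1 − ντ)^k ‖u⁰ − u*‖²`. -/
theorem stmt_12 {n : ℕ} (J : EuclideanSpace ℝ (Fin n) → ℝ)
    (g : EuclideanSpace ℝ (Fin n) → EuclideanSpace ℝ (Fin n))
    (hconv : ConvexOn ℝ Set.univ J)
    (hgrad : ∀ x, HasGradientAt J (g x) x)
    (L : ℝ) (hL : 0 < L)
    (hlip : ∀ x y, ‖g x - g y‖ ≤ L * ‖x - y‖)
    (hS : ∃ z, ∀ w, J z ≤ J w)
    (τ : ℝ) (u : ℕ → EuclideanSpace ℝ (Fin n))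
    (hiter : ∀ k : ℕ, u (k + 1) = u k - τ • g (u k)) :
    (τ = 1 / L →
      ∀ ustar, (∀ w, J ustar ≤ J w) → ∀ k : ℕ, 1 ≤ k →
        J (u k) - J ustar ≤ ‖u 0 - ustar‖ ^ 2 / (2 * τ * (k : ℝ))) ∧
    (∀ ν : ℝ, 0 < ν →
      ConvexOn ℝ Set.univ (fun x => J x - ν / 2 * ‖x‖ ^ 2) →
      0 < τ → τ < 1 / L →
      ∀ ustar, (∀ w, J ustar ≤ J w) → ∀ k : ℕ,
        ‖u k - ustar‖ ^ 2 ≤ (1 - ν * τ) ^ k * ‖u 0 - ustar‖ ^ 2) :=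
  stmt_12_general J g hconv hgrad L hL hlip τ u hiter
end

section
/- Let H be a real Hilbert space, J : H → ℝ ∪ {+∞} proper, convex and lower-semicontinuous with nonempty set S of global minimizers, and let τ > 0. Let (u^k) be the proximal point iterates u^{k+1} = prox_{τJ}(u^k) from an arbitrary initial point u^0 in the domain of J. (i) For every u* ∈ S and every k ≥ 1, J(u^k) − J(u*) ≤ ‖u^0 − u*‖² / (2τk). (ii) If in addition J is ν-strongly convex for some ν > 0, then for its unique global minimizer u* one has ‖u^k − u*‖ ≤ (1 + ντ)^{−k} ‖u^0 − u*‖ for every k ≥ 0. -/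
open scoped Topology

/-- The Moreau–Yosida functional `u ↦ J(u) + (1/(2τ))‖u − v‖²`. -/
noncomputable def moreauYosida {H : Type*} [NormedAddCommGroup H] [InnerProductSpace ℝ H]
    (J : H → EReal) (τ : ℝ) (v u : H) : EReal :=
  J u + (((1 / (2 * τ)) * ‖u - v‖ ^ 2 : ℝ) : EReal)

/-!
Restricted to its effective domain, `J` becomes a real-valued (strongly) convex function `f`, and
each proximal step `p = prox_{τ f}(v)` satisfies the variational inequality
`f p + ν/2 ‖w - p‖² ≤ f w + ⟪p - v, w - p⟫ / τ`, obtained by comparing `p` with the points of the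
segment towards `w` and letting them tend to `p`.

(i) With `ν = 0` and `w = u*` the inequality telescopes:
`f(u^{j+1}) - f(u*) ≤ (‖u^j - u*‖² - ‖u^{j+1} - u*‖²) / (2τ)`, and since `f(u^j)` is
nonincreasing, `k (f(u^k) - f(u*))` is bounded by the sum of these terms, at most
`‖u⁰ - u*‖² / (2τ)`.

(ii) Adding the inequality at `w = u*` to the same inequality for the trivial step
`u* = prox_{τ f}(u*)` gives `ν τ ‖p - u*‖² ≤ ⟪v - p, p - u*⟫`, i.e.
`(1 + ντ) ‖p - u*‖² ≤ ⟪v - u*, p - u*⟫`, so by Cauchy–Schwarz each step contracts the distance to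
`u*` by the factor `(1 + ντ)⁻¹`.
-/

open Filter Set

lemma le_of_forall_mem_Ioo_le_add_mul {a b c : ℝ} (h : ∀ t ∈ Ioo (0 : ℝ) 1, a ≤ b + t * c) :
    a ≤ b := by
  have hlim : Tendsto (fun t : ℝ ↦ b + t * c) (𝓝[>] 0) (𝓝 b) :=
    ((continuous_const.add (continuous_id.mul continuous_const)).tendsto' 0 b
      (by simp)).mono_left nhdsWithin_le_nhds
  exact ge_of_tendsto hlim (by filter_upwards [Ioo_mem_nhdsGT one_pos] using h)

lemma uniformConvexOn_iff_forall_pos {E : Type*} [NormedAddCommGroup E] [NormedSpace ℝ E]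
    {s : Set E} {φ : ℝ → ℝ} {f : E → ℝ} :
    UniformConvexOn s φ f ↔ Convex ℝ s ∧ ∀ ⦃x⦄, x ∈ s → ∀ ⦃y⦄, y ∈ s → ∀ ⦃a b : ℝ⦄,
      0 < a → 0 < b → a + b = 1 → f (a • x + b • y) ≤ a • f x + b • f y - a * b * φ ‖x - y‖ := by
  refine and_congr_right' ⟨fun h x hx y hy a b ha hb hab ↦ h hx hy ha.le hb.le hab,
    fun h x hx y hy a b ha hb hab ↦ ?_⟩
  obtain rfl | ha' := ha.eq_or_lt
  · obtain rfl : b = 1 := by linarith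
    simp
  obtain rfl | hb' := hb.eq_or_lt
  · obtain rfl : a = 1 := by linarith
    simp
  exact h hx hy ha' hb' hab

section Prox

variable {E : Type*} [NormedAddCommGroup E] {s : Set E} {f : E → ℝ} {ν τ : ℝ} {v p w x : E}

/-- `p = prox_{τ f}(v)`, with `f` restricted to `s`. -/
def IsProxOn (s : Set E) (f : E → ℝ) (τ : ℝ) (v p : E) : Prop :=
  p ∈ s ∧ IsMinOn (fun w ↦ f w + ‖w - v‖ ^ 2 / (2 * τ)) s p

lemma IsMinOn.isProxOn_self (hx : IsMinOn f s x) (hxs : x ∈ s) (hτ : 0 ≤ τ) :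
    IsProxOn s f τ x x :=
  ⟨hxs, fun w hw ↦ by
    show f x + ‖x - x‖ ^ 2 / (2 * τ) ≤ f w + ‖w - x‖ ^ 2 / (2 * τ)
    have hxw : f x ≤ f w := hx hw
    have : 0 ≤ ‖w - x‖ ^ 2 / (2 * τ) := by positivity
    rw [sub_self, norm_zero, zero_pow two_ne_zero, zero_div, add_zero]
    linarith⟩

lemma IsProxOn.le_of_mem (hp : IsProxOn s f τ v p) (hv : v ∈ s) (hτ : 0 ≤ τ) : f p ≤ f v := by
  have hmin : f p + ‖p - v‖ ^ 2 / (2 * τ) ≤ f v + ‖v - v‖ ^ 2 / (2 * τ) := hp.2 hv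
  have : 0 ≤ ‖p - v‖ ^ 2 / (2 * τ) := by positivity
  rw [sub_self, norm_zero, zero_pow two_ne_zero, zero_div, add_zero] at hmin
  linarith

variable [InnerProductSpace ℝ E]

namespace IsProxOn

/-- For `ν = 0` this says that `(v - p) / τ` is a subgradient of `f` at `p`. -/
lemma add_sq_le_add_inner (hp : IsProxOn s f τ v p) (hf : StrongConvexOn s ν f) (hw : w ∈ s) :
    f p + ν / 2 * ‖w - p‖ ^ 2 ≤ f w + inner ℝ (p - v) (w - p) / τ := by
  refine le_of_forall_mem_Ioo_le_add_mul
    (c := ν / 2 * ‖w - p‖ ^ 2 + ‖w - p‖ ^ 2 / (2 * τ)) fun t ⟨ht0, ht1⟩ ↦ ?_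
  have hz : t • w + (1 - t) • p ∈ s := hf.1 hw hp.1 ht0.le (by linarith) (by ring)
  have hmin : f p + ‖p - v‖ ^ 2 / (2 * τ)
      ≤ f (t • w + (1 - t) • p) + ‖t • w + (1 - t) • p - v‖ ^ 2 / (2 * τ) := hp.2 hz
  have hconv := hf.2 hw hp.1 ht0.le (by linarith : 0 ≤ 1 - t) (by ring)
  have hnorm : ‖t • w + (1 - t) • p - v‖ ^ 2
      = ‖p - v‖ ^ 2 + 2 * t * inner ℝ (p - v) (w - p) + t ^ 2 * ‖w - p‖ ^ 2 := by
    have : t • w + (1 - t) • p - v = (p - v) + t • (w - p) := by module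
    rw [this, norm_add_sq_real, real_inner_smul_right, norm_smul, mul_pow, Real.norm_eq_abs,
      sq_abs]
    ring
  rw [hnorm] at hmin
  rw [smul_eq_mul, smul_eq_mul] at hconv
  have key : t * (f p + ν / 2 * ‖w - p‖ ^ 2) ≤ t * (f w + inner ℝ (p - v) (w - p) / τ +
      t * (ν / 2 * ‖w - p‖ ^ 2 + ‖w - p‖ ^ 2 / (2 * τ))) := by
    have e : (‖p - v‖ ^ 2 + 2 * t * inner ℝ (p - v) (w - p) + t ^ 2 * ‖w - p‖ ^ 2) / (2 * τ)
        = ‖p - v‖ ^ 2 / (2 * τ) + t * (inner ℝ (p - v) (w - p) / τ)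
          + t ^ 2 * (‖w - p‖ ^ 2 / (2 * τ)) := by
      ring
    rw [e] at hmin
    nlinarith
  exact le_of_mul_le_mul_left key ht0

lemma sub_le_sq_sub_sq (hp : IsProxOn s f τ v p) (hf : ConvexOn ℝ s f) (hw : w ∈ s)
    (hτ : 0 < τ) : f p - f w ≤ (‖v - w‖ ^ 2 - ‖p - w‖ ^ 2) / (2 * τ) := by
  have h := hp.add_sq_le_add_inner (strongConvexOn_zero.2 hf) hw
  have hpar : 2 * inner ℝ (p - v) (w - p) = ‖v - w‖ ^ 2 - ‖p - w‖ ^ 2 - ‖p - v‖ ^ 2 := by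
    rw [show v - w = (p - w) - (p - v) by abel, norm_sub_sq_real, ← neg_sub p w,
      inner_neg_right, real_inner_comm]
    ring
  calc f p - f w ≤ inner ℝ (p - v) (w - p) / τ := by linarith
    _ = (‖v - w‖ ^ 2 - ‖p - w‖ ^ 2 - ‖p - v‖ ^ 2) / (2 * τ) := by
      rw [← hpar]; field_simp
    _ ≤ (‖v - w‖ ^ 2 - ‖p - w‖ ^ 2) / (2 * τ) := by
      gcongr ?_ / _
      exact sub_le_self _ (sq_nonneg _)

lemma mul_norm_sub_le (hp : IsProxOn s f τ v p) (hf : StrongConvexOn s ν f)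
    (hx : IsMinOn f s x) (hxs : x ∈ s) (hτ : 0 < τ) :
    (1 + ν * τ) * ‖p - x‖ ≤ ‖v - x‖ := by
  have hg := hp.add_sq_le_add_inner hf hxs
  have hm := (hx.isProxOn_self hxs hτ.le).add_sq_le_add_inner hf hp.1
  have hinner : inner ℝ (p - v) (x - p) = inner ℝ (v - x) (p - x) - ‖p - x‖ ^ 2 := by
    rw [show p - v = (p - x) - (v - x) by abel, ← neg_sub p x, inner_neg_right, inner_sub_left,
      real_inner_self_eq_norm_sq]
    ring
  rw [sub_self, inner_zero_left, zero_div, add_zero] at hm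
  rw [norm_sub_rev x p] at hg
  have hmono : ν * τ * ‖p - x‖ ^ 2 ≤ inner ℝ (p - v) (x - p) := by
    rw [mul_right_comm, ← le_div_iff₀ hτ]
    linarith
  have hcs : (1 + ν * τ) * ‖p - x‖ * ‖p - x‖ ≤ ‖v - x‖ * ‖p - x‖ := by
    nlinarith [real_inner_le_norm (v - x) (p - x)]
  rcases (norm_nonneg (p - x)).eq_or_lt with h0 | h0
  · rw [← h0, mul_zero]
    exact norm_nonneg _
  · exact le_of_mul_le_mul_right hcs h0

end IsProxOn

variable {u : ℕ → E}

omit [InnerProductSpace ℝ E] in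
lemma mem_of_isProxOn_iterate (hu : ∀ k, IsProxOn s f τ (u k) (u (k + 1))) (hu0 : u 0 ∈ s) :
    ∀ k, u k ∈ s
  | 0 => hu0
  | k + 1 => (hu k).1

lemma le_add_div_of_isProxOn_iterate (hf : ConvexOn ℝ s f)
    (hu : ∀ k, IsProxOn s f τ (u k) (u (k + 1))) (hu0 : u 0 ∈ s) (hx : x ∈ s) (hτ : 0 < τ)
    {k : ℕ} (hk : 0 < k) : f (u k) ≤ f x + ‖u 0 - x‖ ^ 2 / (2 * τ * k) := by
  have hus := mem_of_isProxOn_iterate hu hu0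
  have htel : ∀ n : ℕ, n * (f (u n) - f x) ≤ (‖u 0 - x‖ ^ 2 - ‖u n - x‖ ^ 2) / (2 * τ) := by
    intro n
    induction n with
    | zero => simp
    | succ n ih =>
      have hdec := mul_le_mul_of_nonneg_left ((hu n).le_of_mem (hus n) hτ.le) n.cast_nonneg
      have hstep := (hu n).sub_le_sq_sub_sq hf hx hτ
      have hsplit : (‖u 0 - x‖ ^ 2 - ‖u (n + 1) - x‖ ^ 2) / (2 * τ) = (‖u 0 - x‖ ^ 2
          - ‖u n - x‖ ^ 2) / (2 * τ) + (‖u n - x‖ ^ 2 - ‖u (n + 1) - x‖ ^ 2) / (2 * τ) := by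
        ring
      push_cast
      linarith
  rw [← sub_le_iff_le_add', ← div_div, le_div_iff₀ (Nat.cast_pos.2 hk), mul_comm]
  calc _ ≤ (‖u 0 - x‖ ^ 2 - ‖u k - x‖ ^ 2) / (2 * τ) := htel k
    _ ≤ ‖u 0 - x‖ ^ 2 / (2 * τ) := by
      gcongr ?_ / _
      exact sub_le_self _ (sq_nonneg _)

lemma norm_sub_le_of_isProxOn_iterate (hf : StrongConvexOn s ν f) (hν : 0 ≤ ν)
    (hu : ∀ k, IsProxOn s f τ (u k) (u (k + 1))) (hx : IsMinOn f s x) (hxs : x ∈ s)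
    (hτ : 0 < τ) (k : ℕ) : ‖u k - x‖ ≤ ((1 + ν * τ) ^ k)⁻¹ * ‖u 0 - x‖ := by
  induction k with
  | zero => simp
  | succ k ih =>
    have hq : 0 < 1 + ν * τ := by positivity
    calc ‖u (k + 1) - x‖ ≤ (1 + ν * τ)⁻¹ * ‖u k - x‖ := by
          rw [inv_mul_eq_div, le_div_iff₀ hq, mul_comm]
          exact (hu k).mul_norm_sub_le hf hx hxs hτ
      _ ≤ (1 + ν * τ)⁻¹ * (((1 + ν * τ) ^ k)⁻¹ * ‖u 0 - x‖) := by gcongr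
      _ = ((1 + ν * τ) ^ (k + 1))⁻¹ * ‖u 0 - x‖ := by rw [pow_succ, mul_inv]; ring

end Prox

section EReal

variable {E : Type*} [NormedAddCommGroup E] {J : E → EReal}

lemma strongConvexOn_toReal [NormedSpace ℝ E] {m : ℝ} (hbot : ∀ x, J x ≠ ⊥)
    (hJ : ∀ x y : E, ∀ t : ℝ, 0 < t → t < 1 →
      J (t • x + (1 - t) • y) + ((m / 2 * (t * (1 - t)) * ‖x - y‖ ^ 2 : ℝ) : EReal) ≤
        (t : EReal) * J x + ((1 - t : ℝ) : EReal) * J y) :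
    StrongConvexOn {x | J x ≠ ⊤} m fun x ↦ (J x).toReal := by
  have key : ∀ ⦃x⦄, J x ≠ ⊤ → ∀ ⦃y⦄, J y ≠ ⊤ → ∀ ⦃t : ℝ⦄, 0 < t → t < 1 →
      J (t • x + (1 - t) • y) ≠ ⊤ ∧ (J (t • x + (1 - t) • y)).toReal
        + m / 2 * (t * (1 - t)) * ‖x - y‖ ^ 2 ≤ t * (J x).toReal + (1 - t) * (J y).toReal := by
    intro x hx y hy t ht0 ht1
    have h := hJ x y t ht0 ht1
    rw [← EReal.coe_toReal hx (hbot x), ← EReal.coe_toReal hy (hbot y), ← EReal.coe_mul,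
      ← EReal.coe_mul, ← EReal.coe_add] at h
    have hz : J (t • x + (1 - t) • y) ≠ ⊤ := by
      intro hz
      rw [hz, EReal.top_add_coe] at h
      exact (EReal.coe_lt_top _).not_ge h
    refine ⟨hz, ?_⟩
    rwa [← EReal.coe_toReal hz (hbot _), ← EReal.coe_add, EReal.coe_le_coe_iff] at h
  refine uniformConvexOn_iff_forall_pos.2 ⟨convex_iff_forall_pos.2 fun x hx y hy a b ha hb hab ↦ ?_,
    fun x hx y hy a b ha hb hab ↦ ?_⟩
  · obtain rfl : b = 1 - a := by linarith
    exact (key hx hy ha (by linarith)).1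
  · obtain rfl : b = 1 - a := by linarith
    have := (key hx hy ha (by linarith)).2
    simp only [smul_eq_mul]
    linarith

lemma isProxOn_toReal [InnerProductSpace ℝ E] {τ : ℝ} {v p : E} (hbot : ∀ x, J x ≠ ⊥)
    (hp : ∀ w, moreauYosida J τ v p ≤ moreauYosida J τ v w) (hv : J v ≠ ⊤) :
    IsProxOn {x | J x ≠ ⊤} (fun x ↦ (J x).toReal) τ v p := by
  have hpT : J p ≠ ⊤ := by
    have h := hp v
    intro hpT
    rw [moreauYosida, moreauYosida, hpT, EReal.top_add_coe, sub_self, norm_zero] at h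
    norm_num at h
    exact hv h
  refine ⟨hpT, fun w hw ↦ ?_⟩
  have h := hp w
  rwa [moreauYosida, moreauYosida, ← EReal.coe_toReal hpT (hbot p),
    ← EReal.coe_toReal hw (hbot w), ← EReal.coe_add, ← EReal.coe_add, EReal.coe_le_coe_iff,
    one_div_mul_eq_div, one_div_mul_eq_div] at h

end EReal

theorem stmt_15_general {H : Type*} [NormedAddCommGroup H] [InnerProductSpace ℝ H]
    (J : H → EReal)
    (hbot : ∀ u, J u ≠ ⊥)
    (hconv : ∀ x y : H, ∀ t : ℝ, 0 < t → t < 1 →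
      J (t • x + (1 - t) • y) ≤ (t : EReal) * J x + ((1 - t : ℝ) : EReal) * J y)
    (τ : ℝ) (hτ : 0 < τ)
    (u : ℕ → H) (hdom : J (u 0) ≠ ⊤)
    (hiter : ∀ k : ℕ, ∀ w : H, moreauYosida J τ (u k) (u (k + 1)) ≤
      moreauYosida J τ (u k) w) :
    (∀ ustar : H, (∀ w : H, J ustar ≤ J w) → ∀ k : ℕ, 1 ≤ k →
      J (u k) ≤ J ustar + ((‖u 0 - ustar‖ ^ 2 / (2 * τ * (k : ℝ)) : ℝ) : EReal)) ∧
    (∀ ν : ℝ, 0 < ν →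
      (∀ x y : H, ∀ t : ℝ, 0 < t → t < 1 →
        J (t • x + (1 - t) • y) + ((ν / 2 * (t * (1 - t)) * ‖x - y‖ ^ 2 : ℝ) : EReal) ≤
          (t : EReal) * J x + ((1 - t : ℝ) : EReal) * J y) →
      ∀ ustar : H, (∀ w : H, J ustar ≤ J w) → ∀ k : ℕ,
        ‖u k - ustar‖ ≤ ((1 + ν * τ) ^ k)⁻¹ * ‖u 0 - ustar‖) := by
  have hfin : ∀ k, J (u k) ≠ ⊤ :=
    Nat.rec hdom fun k hk ↦ (isProxOn_toReal hbot (hiter k) hk).1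
  have hprox k := isProxOn_toReal hbot (hiter k) (hfin k)
  have hmin : ∀ x, (∀ w, J x ≤ J w) →
      J x ≠ ⊤ ∧ IsMinOn (fun x ↦ (J x).toReal) {x | J x ≠ ⊤} x := fun x hx ↦
    ⟨ne_top_of_le_ne_top hdom (hx (u 0)), fun w hw ↦ EReal.toReal_le_toReal (hx w) (hbot x) hw⟩
  refine ⟨fun x hx k hk ↦ ?_, fun ν hν hsconv x hx k ↦ ?_⟩
  · have hf := strongConvexOn_zero.1 (strongConvexOn_toReal (m := 0) hbot (by simpa using hconv))
    rw [← EReal.coe_toReal (hfin k) (hbot _), ← EReal.coe_toReal (hmin x hx).1 (hbot x),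
      ← EReal.coe_add, EReal.coe_le_coe_iff]
    exact le_add_div_of_isProxOn_iterate hf hprox (hfin 0) (hmin x hx).1 hτ hk
  · exact norm_sub_le_of_isProxOn_iterate (strongConvexOn_toReal hbot hsconv) hν.le hprox
      (hmin x hx).2 (hmin x hx).1 hτ k

/-- Convergence of the proximal point algorithm for a proper, convex, lsc functional `J`
with nonempty set of global minimizers: (i) `J(u^k) − J(u*) ≤ ‖u⁰ − u*‖²/(2τk)` for
`k ≥ 1` (stated as `J(u^k) ≤ J(u*) + ‖u⁰ − u*‖²/(2τk)`), and (ii) if `J` is moreover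
`ν`-strongly convex, `‖u^k − u*‖ ≤ (1 + ντ)^{−k} ‖u⁰ − u*‖`. -/
theorem stmt_15 {H : Type*} [NormedAddCommGroup H] [InnerProductSpace ℝ H]
    [CompleteSpace H] (J : H → EReal)
    (hbot : ∀ u, J u ≠ ⊥)
    (hproper : ∃ u, J u ≠ ⊤)
    (hconv : ∀ x y : H, ∀ t : ℝ, 0 < t → t < 1 →
      J (t • x + (1 - t) • y) ≤ (t : EReal) * J x + ((1 - t : ℝ) : EReal) * J y)
    (hlsc : LowerSemicontinuous J)
    (hS : ∃ z : H, ∀ w : H, J z ≤ J w)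
    (τ : ℝ) (hτ : 0 < τ)
    (u : ℕ → H) (hdom : J (u 0) ≠ ⊤)
    (hiter : ∀ k : ℕ, ∀ w : H, moreauYosida J τ (u k) (u (k + 1)) ≤
      moreauYosida J τ (u k) w) :
    (∀ ustar : H, (∀ w : H, J ustar ≤ J w) → ∀ k : ℕ, 1 ≤ k →
      J (u k) ≤ J ustar + ((‖u 0 - ustar‖ ^ 2 / (2 * τ * (k : ℝ)) : ℝ) : EReal)) ∧
    (∀ ν : ℝ, 0 < ν →
      (∀ x y : H, ∀ t : ℝ, 0 < t → t < 1 →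
        J (t • x + (1 - t) • y) + ((ν / 2 * (t * (1 - t)) * ‖x - y‖ ^ 2 : ℝ) : EReal) ≤
          (t : EReal) * J x + ((1 - t : ℝ) : EReal) * J y) →
      ∀ ustar : H, (∀ w : H, J ustar ≤ J w) → ∀ k : ℕ,
        ‖u k - ustar‖ ≤ ((1 + ν * τ) ^ k)⁻¹ * ‖u 0 - ustar‖) :=
  stmt_15_general J hbot hconv τ hτ u hdom hiter
end

section
/- Let H be a real Hilbert space and M : H → 2^H a set-valued operator. Then M is maximal monotone if and only if there exists a nonexpansive (i.e. 1-Lipschitz) map Q : H → H such that the resolvent (I + M)^{-1} equals (1/2)(I + Q); explicitly, M is maximal monotone if and only if there exists a 1-Lipschitz Q : H → H such that for all x, u ∈ H: (x − u ∈ M(u)) ⟺ (u = (x + Q(x))/2). -/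
open scoped Topology RealInnerProductSpace

open Filter Set

/-!
In Cayley coordinates `(u, v) ↦ (u + v, u - v)`, monotonicity of `M` says exactly that the image of
its graph is the graph of a nonexpansive partial map, and the resolvent identity says that this
partial map is a total map `Q`. So the converse direction is immediate, and for the direct one
maximality upgrades Kirszbraun's extension of the partial map to the required `Q`.

Kirszbraun's theorem follows by Zorn's lemma from the one-point extension, i.e. from the
nonemptiness of an intersection of closed balls `closedBall (b i) ‖p - a i‖`. For finitely many
balls, a minimiser `y₀` of `maxᵢ (‖y - b i‖² - ‖p - a i‖²)` is a convex combination of the active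
centres, and averaging with these weights, using `‖b i - b j‖ ≤ ‖a i - a j‖`, shows that the
minimum is `≤ 0`. For infinitely many balls, the nearest points of the finite intersections form
a Cauchy net whose limit lies in every ball.
-/

section Convexity

variable {𝕜 E ι : Type*} [Field 𝕜] [LinearOrder 𝕜] [IsStrictOrderedRing 𝕜] [AddCommGroup E]
  [Module 𝕜 E]

theorem exists_sum_smul_eq_of_mem_convexHull_image {s : Finset ι} {b : ι → E} {x : E}
    (hx : x ∈ convexHull 𝕜 (b '' s)) :
    ∃ w : ι → 𝕜, (∀ i ∈ s, 0 ≤ w i) ∧ ∑ i ∈ s, w i = 1 ∧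
      ∑ i ∈ s, w i • b i = x := by
  classical
  let L : (ι → 𝕜) →ₗ[𝕜] E :=
    { toFun := fun w => ∑ i ∈ s, w i • b i
      map_add' := fun w w' => by simp only [Pi.add_apply, add_smul, Finset.sum_add_distrib]
      map_smul' := fun c w => by simp only [Pi.smul_apply, smul_eq_mul, mul_smul,
        Finset.smul_sum, RingHom.id_apply] }
  let Δ := {w : ι → 𝕜 | (∀ i ∈ s, 0 ≤ w i) ∧ ∑ i ∈ s, w i = 1}
  have hconv : Convex 𝕜 Δ := by
    rintro w ⟨hw₀, hw₁⟩ w' ⟨hw₀', hw₁'⟩ c c' hc hc' hcc'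
    refine ⟨fun i hi => ?_, ?_⟩
    · simp only [Pi.add_apply, Pi.smul_apply, smul_eq_mul]
      exact add_nonneg (mul_nonneg hc (hw₀ i hi)) (mul_nonneg hc' (hw₀' i hi))
    · simp only [Pi.add_apply, Pi.smul_apply, smul_eq_mul, Finset.sum_add_distrib,
        ← Finset.mul_sum, hw₁, hw₁', mul_one, hcc']
  have hsub : b '' s ⊆ L '' Δ := by
    rintro _ ⟨i, hi, rfl⟩
    rw [Finset.mem_coe] at hi
    refine ⟨Pi.single i 1, ⟨fun j _ => ?_, by simp [hi]⟩, by simp [L, Pi.single_apply, hi]⟩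
    by_cases h : j = i <;> simp [h]
  obtain ⟨w, hw, rfl⟩ := convexHull_min hsub (hconv.linear_image L) hx
  exact ⟨w, hw.1, hw.2, rfl⟩

end Convexity

section InnerProductSpace

variable {H : Type*} [NormedAddCommGroup H] [InnerProductSpace ℝ H]

theorem Convex.exists_forall_norm_sub_sq_add_le {K : Set H} (hconv : Convex ℝ K)
    (hK : IsComplete K) (hne : K.Nonempty) (y : H) :
    ∃ z ∈ K, ∀ c ∈ K, ‖y - z‖ ^ 2 + ‖z - c‖ ^ 2 ≤ ‖y - c‖ ^ 2 := by
  obtain ⟨z, hz, hmin⟩ := exists_norm_eq_iInf_of_complete_convex hne hK hconv y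
  refine ⟨z, hz, fun c hc => ?_⟩
  have hinner := (norm_eq_iInf_iff_real_inner_le_zero hconv hz).1 hmin c hc
  have := norm_sub_sq_real (y - z) (c - z)
  rw [sub_sub_sub_cancel_right, norm_sub_rev c z] at this
  linarith

theorem Convex.frequently_forall_norm_sub_lt {K : Set H} (hconv : Convex ℝ K)
    (hK : IsComplete K) {y : H} (hy : y ∉ K) :
    ∃ᶠ y' in 𝓝 y, ∀ c ∈ K, ‖y' - c‖ < ‖y - c‖ := by
  rcases K.eq_empty_or_nonempty with rfl | hne
  · exact Frequently.of_forall fun _ c hc => hc.elim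
  obtain ⟨z, hzK, hz⟩ := hconv.exists_forall_norm_sub_sq_add_le hK hne y
  have hyz : 0 < ‖z - y‖ := norm_pos_iff.2 (sub_ne_zero.2 (ne_of_mem_of_not_mem hzK hy))
  have hlim : Tendsto (fun t : ℝ => y + t • (z - y)) (𝓝[>] 0) (𝓝 y) := by
    have : Continuous fun t : ℝ => y + t • (z - y) := by fun_prop
    simpa using (this.tendsto 0).mono_left nhdsWithin_le_nhds
  refine hlim.frequently (Eventually.frequently ?_)
  filter_upwards [Ioo_mem_nhdsGT two_pos] with t ⟨ht0, ht2⟩ c hc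
  have key := hz c hc
  rw [show z - c = (y - c) + (z - y) by abel, norm_add_sq_real, norm_sub_rev y z] at key
  refine lt_of_pow_lt_pow_left₀ 2 (norm_nonneg _) ?_
  rw [show y + t • (z - y) - c = (y - c) + t • (z - y) by abel, norm_add_sq_real,
    real_inner_smul_right, norm_smul, Real.norm_eq_abs, abs_of_pos ht0]
  nlinarith [mul_pos ht0 (sub_pos.2 ht2), pow_pos hyz 2]

theorem sum_sum_mul_mul_norm_sub_sq {ι : Type*} (s : Finset ι) (w : ι → ℝ) (v : ι → H) :
    ∑ i ∈ s, ∑ j ∈ s, w i * w j * ‖v i - v j‖ ^ 2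
      = 2 * (∑ i ∈ s, w i) * ∑ i ∈ s, w i * ‖v i‖ ^ 2
        - 2 * ‖∑ i ∈ s, w i • v i‖ ^ 2 := by
  have hcross :
      ‖∑ i ∈ s, w i • v i‖ ^ 2 = ∑ i ∈ s, ∑ j ∈ s, w i * w j * ⟪v i, v j⟫ := by
    simp only [← real_inner_self_eq_norm_sq, sum_inner, inner_sum, real_inner_smul_left,
      real_inner_smul_right, mul_assoc]
    exact Finset.sum_congr rfl fun i _ => Finset.sum_congr rfl fun j _ => by
      rw [real_inner_comm]
  simp only [hcross, norm_sub_sq_real, mul_add, mul_sub, Finset.sum_add_distrib,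
    Finset.sum_sub_distrib, Finset.mul_sum, Finset.sum_mul]
  rw [Finset.sum_comm (f := fun i j => w i * w j * ‖v j‖ ^ 2)]
  simp only [← Finset.sum_sub_distrib, ← Finset.sum_add_distrib]
  exact Finset.sum_congr rfl fun i _ => Finset.sum_congr rfl fun j _ => by ring

theorem sum_mul_norm_sum_smul_sub_sq_le {ι : Type*} {s : Finset ι} {w : ι → ℝ}
    (hw₀ : ∀ i ∈ s, 0 ≤ w i) (hw₁ : ∑ i ∈ s, w i = 1) {a b : ι → H}
    (hab : ∀ i ∈ s, ∀ j ∈ s, ‖b i - b j‖ ≤ ‖a i - a j‖) (p : H) :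
    ∑ i ∈ s, w i * ‖(∑ j ∈ s, w j • b j) - b i‖ ^ 2 ≤
      ∑ i ∈ s, w i * ‖p - a i‖ ^ 2 := by
  set c := ∑ j ∈ s, w j • b j
  have hb := sum_sum_mul_mul_norm_sub_sq s w fun i => b i - c
  have ha := sum_sum_mul_mul_norm_sub_sq s w fun i => a i - p
  have hcenter : ∑ i ∈ s, w i • (b i - c) = 0 := by
    simp only [smul_sub, Finset.sum_sub_distrib, ← Finset.sum_smul, hw₁, one_smul, c, sub_self]
  simp only [sub_sub_sub_cancel_right, hcenter, norm_zero, hw₁] at ha hb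
  have hle : ∑ i ∈ s, ∑ j ∈ s, w i * w j * ‖b i - b j‖ ^ 2
      ≤ ∑ i ∈ s, ∑ j ∈ s, w i * w j * ‖a i - a j‖ ^ 2 :=
    Finset.sum_le_sum fun i hi => Finset.sum_le_sum fun j hj =>
      mul_le_mul_of_nonneg_left (pow_le_pow_left₀ (norm_nonneg _) (hab i hi j hj) 2)
        (mul_nonneg (hw₀ i hi) (hw₀ j hj))
  simp only [norm_sub_rev c, norm_sub_rev p]
  nlinarith [sq_nonneg ‖∑ i ∈ s, w i • (a i - p)‖]

theorem exists_forall_sup'_norm_sub_sq_sub_le {ι : Type*} {s : Finset ι} (hs : s.Nonempty)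
    (b : ι → H) (r : ι → ℝ) :
    ∃ y₀, ∀ y, s.sup' hs (fun i => ‖y₀ - b i‖ ^ 2 - r i) ≤
      s.sup' hs (fun i => ‖y - b i‖ ^ 2 - r i) := by
  have hK : IsCompact (convexHull ℝ (b '' s)) :=
    (s.finite_toSet.image b).isCompact_convexHull ℝ
  have hKne : (convexHull ℝ (b '' s)).Nonempty := (hs.to_set.image b).convexHull
  have hcont : Continuous fun y => s.sup' hs (fun i => ‖y - b i‖ ^ 2 - r i) :=
    Continuous.finset_sup'_apply hs fun i _ => by fun_prop
  obtain ⟨y₀, hy₀, hmin⟩ := hK.exists_isMinOn hKne hcont.continuousOn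
  refine ⟨y₀, fun y => ?_⟩
  -- projecting onto the hull of the centres moves `y` closer to every centre
  obtain ⟨z, hz, hzy⟩ :=
    (convex_convexHull ℝ _).exists_forall_norm_sub_sq_add_le hK.isComplete hKne y
  refine (hmin hz).trans (Finset.sup'_mono_fun fun i hi => ?_)
  have := hzy (b i) (subset_convexHull ℝ _ (mem_image_of_mem b hi))
  linarith [sq_nonneg ‖y - z‖]

theorem mem_convexHull_of_forall_sup'_le {ι : Type*} {s : Finset ι} (hs : s.Nonempty)
    {b : ι → H} {r : ι → ℝ} {y₀ : H}
    (hmin : ∀ y, s.sup' hs (fun i => ‖y₀ - b i‖ ^ 2 - r i) ≤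
      s.sup' hs (fun i => ‖y - b i‖ ^ 2 - r i)) :
    y₀ ∈ convexHull ℝ
      (b '' ({i ∈ s | ‖y₀ - b i‖ ^ 2 - r i = s.sup' hs fun i => ‖y₀ - b i‖ ^ 2 - r i} :
        Finset ι)) := by
  set m := s.sup' hs fun i => ‖y₀ - b i‖ ^ 2 - r i
  set A : Finset ι := {i ∈ s | ‖y₀ - b i‖ ^ 2 - r i = m}
  by_contra hout
  have hcloser := (convex_convexHull ℝ _).frequently_forall_norm_sub_lt
    ((A.finite_toSet.image b).isCompact_convexHull ℝ).isComplete hout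
  have hinactive : ∀ᶠ y in 𝓝 y₀, ∀ i ∈ s, i ∉ A → ‖y - b i‖ ^ 2 - r i < m := by
    refine (eventually_all_finset s).2 fun i hi => ?_
    by_cases hiA : i ∈ A
    · exact Eventually.of_forall fun _ h => (h hiA).elim
    have hlt : ‖y₀ - b i‖ ^ 2 - r i < m :=
      (Finset.le_sup' (fun i => ‖y₀ - b i‖ ^ 2 - r i) hi).lt_of_ne
        fun h => hiA (Finset.mem_filter.2 ⟨hi, h⟩)
    have hcont : Continuous fun y => ‖y - b i‖ ^ 2 - r i := by fun_prop
    exact (hcont.continuousAt.eventually_lt continuousAt_const hlt).mono fun _ h _ => h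
  obtain ⟨y, hyA, hys⟩ := (hcloser.and_eventually hinactive).exists
  refine (hmin y).not_gt ((Finset.sup'_lt_iff hs).2 fun i hi => ?_)
  by_cases hiA : i ∈ A
  · have hlt := hyA (b i) (subset_convexHull ℝ _ (mem_image_of_mem b hiA))
    rw [← (Finset.mem_filter.1 hiA).2]
    gcongr
  · exact hys i hi hiA

theorem exists_forall_norm_sub_le_of_finset {ι : Type*} (s : Finset ι) {a b : ι → H}
    (hab : ∀ i ∈ s, ∀ j ∈ s, ‖b i - b j‖ ≤ ‖a i - a j‖) (p : H) :
    ∃ y, ∀ i ∈ s, ‖y - b i‖ ≤ ‖p - a i‖ := by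
  rcases s.eq_empty_or_nonempty with rfl | hs
  · exact ⟨p, by simp⟩
  obtain ⟨y₀, hy₀⟩ := exists_forall_sup'_norm_sub_sq_sub_le hs b fun i => ‖p - a i‖ ^ 2
  set m := s.sup' hs fun i => ‖y₀ - b i‖ ^ 2 - ‖p - a i‖ ^ 2
  set A : Finset ι := {i ∈ s | ‖y₀ - b i‖ ^ 2 - ‖p - a i‖ ^ 2 = m}
  obtain ⟨w, hw₀, hw₁, hw⟩ :=
    exists_sum_smul_eq_of_mem_convexHull_image (mem_convexHull_of_forall_sup'_le hs hy₀)
  have hineq := sum_mul_norm_sum_smul_sub_sq_le hw₀ hw₁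
    (fun i hi j hj => hab i (Finset.mem_filter.1 hi).1 j (Finset.mem_filter.1 hj).1) p
  have hactive : ∀ i ∈ A, w i * ‖y₀ - b i‖ ^ 2 = w i * m + w i * ‖p - a i‖ ^ 2 := by
    intro i hi
    rw [← (Finset.mem_filter.1 hi).2]
    ring
  rw [hw, Finset.sum_congr rfl hactive, Finset.sum_add_distrib, ← Finset.sum_mul, hw₁]
    at hineq
  have hm : m ≤ 0 := by linarith
  refine ⟨y₀, fun i hi => ?_⟩
  have := Finset.le_sup' (fun i => ‖y₀ - b i‖ ^ 2 - ‖p - a i‖ ^ 2) hi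
  exact pow_le_pow_iff_left₀ (norm_nonneg _) (norm_nonneg _) two_ne_zero |>.1 (by linarith)

theorem real_inner_nonneg_iff_norm_sub_le_norm_add (x y : H) :
    0 ≤ ⟪x, y⟫ ↔ ‖x - y‖ ≤ ‖x + y‖ := by
  rw [← pow_le_pow_iff_left₀ (norm_nonneg _) (norm_nonneg _) two_ne_zero, norm_sub_sq_real,
    norm_add_sq_real]
  constructor <;> intro h <;> linarith

theorem real_inner_sub_sub_nonneg_iff (u v u' v' : H) :
    0 ≤ ⟪v - v', u - u'⟫ ↔ ‖(u - v) - (u' - v')‖ ≤ ‖(u + v) - (u' + v')‖ := by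
  rw [real_inner_comm, real_inner_nonneg_iff_norm_sub_le_norm_add]
  rw [show (u - v) - (u' - v') = (u - u') - (v - v') by abel,
    show (u + v) - (u' + v') = (u - u') + (v - v') by abel]

theorem mem_of_forall_real_inner_nonneg_of_surjective {M : H → Set H}
    (hsurj : ∀ x, ∃ u, x - u ∈ M u) {u v : H}
    (h : ∀ u' v', v' ∈ M u' → 0 ≤ ⟪v - v', u - u'⟫) : v ∈ M u := by
  obtain ⟨u', hu'⟩ := hsurj (u + v)
  have hinner := h u' _ hu'
  rw [show u - u' = -(v - (u + v - u')) by abel, inner_neg_right, neg_nonneg,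
    real_inner_self_nonpos, sub_eq_zero, eq_sub_iff_add_eq, add_comm v, add_left_inj] at hinner
  rwa [hinner, add_sub_cancel_left] at hu'

section Complete

variable [CompleteSpace H]

theorem nonempty_iInter_of_antitone_convex {ι : Type*} [SemilatticeSup ι] {C : ι → Set H}
    (hC : Antitone C) (hconv : ∀ i, Convex ℝ (C i)) (hclosed : ∀ i, IsClosed (C i))
    (hne : ∀ i, (C i).Nonempty) (hbdd : ∃ i, Bornology.IsBounded (C i)) :
    (⋂ i, C i).Nonempty := by
  obtain ⟨i₀, hi₀⟩ := hbdd
  have : Nonempty ι := ⟨i₀⟩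
  choose z hzC hz using fun i =>
    (hconv i).exists_forall_norm_sub_sq_add_le (hclosed i).isComplete (hne i) 0
  simp only [zero_sub, norm_neg] at hz
  -- the nearest points `z i` to the origin have increasing norms and form a Cauchy net
  have hmono : ∀ i j, i ≤ j → ‖z i‖ ^ 2 + ‖z i - z j‖ ^ 2 ≤ ‖z j‖ ^ 2 :=
    fun i j hij => hz i (z j) (hC hij (hzC j))
  obtain ⟨R, hR⟩ := hi₀.subset_closedBall 0
  have hbound : BddAbove (range fun i => ‖z i‖ ^ 2) := by
    refine ⟨R ^ 2, forall_mem_range.2 fun i => ?_⟩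
    have hR' : ‖z (i ⊔ i₀)‖ ≤ R := mem_closedBall_zero_iff.1 (hR (hC le_sup_right (hzC _)))
    nlinarith [hmono i (i ⊔ i₀) le_sup_left, norm_nonneg (z (i ⊔ i₀)), norm_nonneg (z i)]
  have hcauchy : CauchySeq z := by
    refine Metric.cauchySeq_iff'.2 fun ε hε => ?_
    obtain ⟨N, hN⟩ := exists_lt_of_lt_ciSup
      (show (⨆ i, ‖z i‖ ^ 2) - ε ^ 2 < ⨆ i, ‖z i‖ ^ 2 by linarith [pow_pos hε 2])
    refine ⟨N, fun n hn => lt_of_pow_lt_pow_left₀ 2 hε.le ?_⟩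
    rw [dist_eq_norm, norm_sub_rev]
    linarith [hmono N n hn, le_ciSup hbound n]
  obtain ⟨y, hy⟩ := cauchySeq_tendsto_of_complete hcauchy
  refine ⟨y, mem_iInter.2 fun i => (hclosed i).mem_of_tendsto hy ?_⟩
  filter_upwards [eventually_ge_atTop i] with j hj using hC hj (hzC j)

open Metric in
theorem nonempty_iInter_closedBall_of_forall_finset {ι : Type*} (c : ι → H) (r : ι → ℝ)
    (h : ∀ s : Finset ι, (⋂ i ∈ s, closedBall (c i) (r i)).Nonempty) :
    (⋂ i, closedBall (c i) (r i)).Nonempty := by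
  classical
  rcases isEmpty_or_nonempty ι with hι | ⟨⟨i₀⟩⟩
  · simp
  obtain ⟨y, hy⟩ := nonempty_iInter_of_antitone_convex
    (C := fun s : Finset ι => ⋂ i ∈ s, closedBall (c i) (r i))
    (fun s t hst => biInter_subset_biInter_left hst)
    (fun s => convex_iInter₂ fun i _ => convex_closedBall _ _)
    (fun s => isClosed_biInter fun i _ => isClosed_closedBall) h
    ⟨{i₀}, by simpa using isBounded_closedBall⟩
  exact ⟨y, mem_iInter.2 fun i => by simpa using mem_iInter.1 hy {i}⟩

theorem exists_forall_norm_sub_le {ι : Type*} {a b : ι → H}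
    (hab : ∀ i j, ‖b i - b j‖ ≤ ‖a i - a j‖) (p : H) :
    ∃ y, ∀ i, ‖y - b i‖ ≤ ‖p - a i‖ := by
  obtain ⟨y, hy⟩ :=
    nonempty_iInter_closedBall_of_forall_finset b (fun i => ‖p - a i‖) fun s => by
    obtain ⟨y, hy⟩ := exists_forall_norm_sub_le_of_finset s (fun i _ j _ => hab i j) p
    exact ⟨y, mem_iInter₂.2 fun i hi => mem_closedBall_iff_norm.2 (hy i hi)⟩
  exact ⟨y, fun i => mem_closedBall_iff_norm.1 (mem_iInter.1 hy i)⟩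

theorem kirszbraun {G : Set (H × H)}
    (hG : ∀ g ∈ G, ∀ g' ∈ G, ‖g.2 - g'.2‖ ≤ ‖g.1 - g'.1‖) :
    ∃ Q : H → H, LipschitzWith 1 Q ∧ ∀ g ∈ G, Q g.1 = g.2 := by
  let S := {G' : Set (H × H) | G ⊆ G' ∧ ∀ g ∈ G', ∀ g' ∈ G', ‖g.2 - g'.2‖ ≤ ‖g.1 - g'.1‖}
  have hchain : ∀ c ⊆ S, IsChain (· ⊆ ·) c → c.Nonempty → ∃ ub ∈ S, ∀ s ∈ c, s ⊆ ub := by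
    rintro c hcS hc ⟨G₀, hG₀⟩
    refine ⟨⋃₀ c, ⟨(hcS hG₀).1.trans (subset_sUnion_of_mem hG₀), ?_⟩,
      fun s hs => subset_sUnion_of_mem hs⟩
    rintro g ⟨t, htc, hgt⟩ g' ⟨t', ht'c, hgt'⟩
    rcases hc.total htc ht'c with h | h
    · exact (hcS ht'c).2 g (h hgt) g' hgt'
    · exact (hcS htc).2 g hgt g' (h hgt')
  obtain ⟨Gm, hGGm, hmax⟩ := zorn_subset_nonempty S hchain G ⟨subset_rfl, hG⟩
  have hGm := hmax.prop.2
  have htotal : ∀ x, ∃ y, (x, y) ∈ Gm := by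
    intro x
    obtain ⟨y, hy⟩ := exists_forall_norm_sub_le (a := fun g : Gm => g.1.1)
      (b := fun g : Gm => g.1.2) (fun g g' => hGm _ g.2 _ g'.2) x
    refine ⟨y, hmax.mem_of_prop_insert ⟨hmax.prop.1.trans (subset_insert _ _), ?_⟩⟩
    rintro g (rfl | hg) g' (rfl | hg')
    · simp
    · exact hy ⟨g', hg'⟩
    · rw [norm_sub_rev, norm_sub_rev g.1]
      exact hy ⟨g, hg⟩
    · exact hGm g hg g' hg'
  choose Q hQ using htotal
  refine ⟨Q, LipschitzWith.mk_one fun x y => ?_, fun g hg => ?_⟩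
  · simpa only [dist_eq_norm] using hGm _ (hQ x) _ (hQ y)
  · simpa [sub_eq_zero] using hGm _ (hQ g.1) _ (hGGm hg)

end Complete

end InnerProductSpace

theorem eq_inv_two_smul_add_iff {E : Type*} [AddCommGroup E] [Module ℝ E] {x y u : E} :
    u = (2 : ℝ)⁻¹ • (x + y) ↔ y = u - (x - u) := by
  constructor <;> rintro rfl <;> module

/-- (Minty-type characterization) A set-valued operator `M` on a real Hilbert space is
maximal monotone iff there exists a nonexpansive (1-Lipschitz) map `Q` such that the
resolvent `(I + M)⁻¹` equals `(1/2)(I + Q)`, i.e. for all `x, u`: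
`x − u ∈ M(u)` iff `u = (x + Q(x))/2`. -/
theorem stmt_18 {H : Type*} [NormedAddCommGroup H] [InnerProductSpace ℝ H]
    [CompleteSpace H] (M : H → Set H) :
    ((∀ u u2 v v2 : H, v ∈ M u → v2 ∈ M u2 → 0 ≤ (⟪v - v2, u - u2⟫ : ℝ)) ∧
      (∀ u v : H, (∀ u2 v2 : H, v2 ∈ M u2 → 0 ≤ (⟪v - v2, u - u2⟫ : ℝ)) → v ∈ M u)) ↔
    (∃ Q : H → H, LipschitzWith 1 Q ∧
      ∀ x u : H, (x - u ∈ M u ↔ u = (2 : ℝ)⁻¹ • (x + Q x))) := by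
  constructor
  · rintro ⟨hmono, hmax⟩
    obtain ⟨Q, hQ, hQG⟩ :=
        kirszbraun (G := {g | ∃ u v, v ∈ M u ∧ g = (u + v, u - v)}) <| by
      rintro _ ⟨u, v, hv, rfl⟩ _ ⟨u', v', hv', rfl⟩
      exact (real_inner_sub_sub_nonneg_iff u v u' v').1 (hmono u u' v v' hv hv')
    have hQM : ∀ u v, v ∈ M u → Q (u + v) = u - v := fun u v hv => hQG _ ⟨u, v, hv, rfl⟩
    refine ⟨Q, hQ, fun x u => ?_⟩
    rw [eq_inv_two_smul_add_iff]
    refine ⟨fun h => by simpa using hQM u (x - u) h,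
      fun h => hmax u (x - u) fun u' v' hv' => ?_⟩
    rw [real_inner_sub_sub_nonneg_iff, add_sub_cancel, ← h, ← hQM u' v' hv']
    simpa [dist_eq_norm] using hQ.dist_le_mul x (u' + v')
  · rintro ⟨Q, hQ, hres⟩
    have hQM : ∀ u v, v ∈ M u → Q (u + v) = u - v := fun u v hv => by
      simpa using eq_inv_two_smul_add_iff.1 ((hres (u + v) u).1 (by simpa using hv))
    refine ⟨fun u u' v v' hv hv' => ?_, fun u v h =>
      mem_of_forall_real_inner_nonneg_of_surjective (fun x => ⟨_, (hres x _).2 rfl⟩) h⟩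
    rw [real_inner_sub_sub_nonneg_iff, ← hQM u v hv, ← hQM u' v' hv']
    simpa [dist_eq_norm] using hQ.dist_le_mul (u + v) (u' + v')
end

section
/- (Continuity of the learned MSE-optimal spectral reconstruction) Let U and V be real Hilbert spaces, (u_n)_{n∈ℕ} an orthonormal family in U, (v_n)_{n∈ℕ} an orthonormal family in V, (σ_n)_{n∈ℕ} a sequence of positive reals with σ_n → 0, and (Δ_n)_{n∈ℕ}, (Π_n)_{n∈ℕ} sequences of positive reals. Define the MSE-optimal spectral coefficients θ_n := σ_n / (σ_n² + Δ_n/Π_n). Then the map f ↦ Σ_{n=1}^∞ θ_n ⟨f, v_n⟩ u_n defines a continuous (bounded) linear operator V → U if and only if there exists a constant c > 0 such that Δ_n ≥ c σ_n Π_n for all but finitely many n. In particular, this condition is fulfilled if there exist c > 0 and n₀ ∈ ℕ such that Δ_n ≥ c Π_n for all n ≥ n₀. -/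
/-!
By orthonormality, the diagonal operator `f ↦ ∑ θ_n ⟪f, v_n⟫ u_n` is bounded exactly when
`(θ_n)` is bounded: it factors through `ℓ²` as multiplication by `θ`, and it sends `v_n` to
`θ_n u_n`. For `θ_n = σ_n / (σ_n² + Δ_n/Π_n)`: if `θ_n ≤ M`, then once `σ_n ≤ 1/(2M)` we get
`σ_n = θ_n (σ_n² + Δ_n/Π_n) ≤ σ_n/2 + M Δ_n/Π_n`, i.e. `Δ_n/Π_n ≥ σ_n/(2M)`; conversely
`Δ_n/Π_n ≥ c σ_n` gives `θ_n ≤ 1/c`.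
-/

open scoped Topology RealInnerProductSpace lp
open Filter

section DiagonalOperator

variable {ι U V : Type*} [NormedAddCommGroup U] [InnerProductSpace ℝ U]
  [NormedAddCommGroup V] [InnerProductSpace ℝ V] {u : ι → U} {v : ι → V} {θ : ι → ℝ} {M : ℝ}

theorem Orthonormal.sum_sq_mul_inner_le (hv : Orthonormal ℝ v) (hθ : ∀ i, |θ i| ≤ M)
    (f : V) (s : Finset ι) : ∑ i ∈ s, ‖θ i * ⟪f, v i⟫‖ ^ 2 ≤ (M * ‖f‖) ^ 2 :=
  calc ∑ i ∈ s, ‖θ i * ⟪f, v i⟫‖ ^ 2 ≤ ∑ i ∈ s, M ^ 2 * ‖⟪v i, f⟫‖ ^ 2 := by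
        gcongr with i
        rw [norm_mul, mul_pow, real_inner_comm, Real.norm_eq_abs]
        gcongr
        exact hθ i
    _ = M ^ 2 * ∑ i ∈ s, ‖⟪v i, f⟫‖ ^ 2 := by rw [Finset.mul_sum]
    _ ≤ M ^ 2 * ‖f‖ ^ 2 := by gcongr; exact hv.sum_inner_products_le f
    _ = (M * ‖f‖) ^ 2 := by ring

noncomputable def Orthonormal.weightedCoeffs (hv : Orthonormal ℝ v) (θ : ι → ℝ)
    (hθ : ∀ i, |θ i| ≤ M) : V →L[ℝ] ℓ²(ι, ℝ) :=
  have hθ' i : |θ i| ≤ |M| := (hθ i).trans (le_abs_self M)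
  LinearMap.mkContinuous
    { toFun f := ⟨fun i => θ i * ⟪f, v i⟫, memℓp_gen' fun s => by
        simpa using hv.sum_sq_mul_inner_le hθ' f s⟩
      map_add' f g := by ext i; simp only [inner_add_left, mul_add]; rfl
      map_smul' c f := by ext i; simp [real_inner_smul_left, mul_left_comm] }
    |M| fun f => lp.norm_le_of_forall_sum_le (by norm_num) (by positivity) fun s => by
      simpa using hv.sum_sq_mul_inner_le hθ' f s

@[simp]
theorem Orthonormal.weightedCoeffs_apply (hv : Orthonormal ℝ v) (hθ : ∀ i, |θ i| ≤ M) (f : V)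
    (i : ι) : hv.weightedCoeffs θ hθ f i = θ i * ⟪f, v i⟫ := rfl

theorem Orthonormal.exists_hasSum_smul_of_abs_le [CompleteSpace U] (hu : Orthonormal ℝ u)
    (hv : Orthonormal ℝ v) (hθ : ∀ i, |θ i| ≤ M) :
    ∃ T : V →L[ℝ] U, ∀ f, HasSum (fun i => (θ i * ⟪f, v i⟫) • u i) (T f) :=
  ⟨hu.orthogonalFamily.linearIsometry.toContinuousLinearMap.comp (hv.weightedCoeffs θ hθ),
    fun f => by simpa using hu.orthogonalFamily.hasSum_linearIsometry (hv.weightedCoeffs θ hθ f)⟩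

theorem abs_le_opNorm_of_hasSum_smul (hu : Orthonormal ℝ u) (hv : Orthonormal ℝ v)
    (T : V →L[ℝ] U) (hT : ∀ f, HasSum (fun i => (θ i * ⟪f, v i⟫) • u i) (T f)) (i : ι) :
    |θ i| ≤ ‖T‖ := by
  have hTv : T (v i) = θ i • u i := by
    refine ((hasSum_single i fun j hj => ?_).unique (hT (v i))).symm.trans ?_
    · simp [hv.2 hj.symm]
    · simp [hv.1 i]
  simpa [hTv, norm_smul, hu.1 i, hv.1 i] using T.le_opNorm (v i)

theorem Orthonormal.exists_hasSum_smul_iff [CompleteSpace U] (hu : Orthonormal ℝ u)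
    (hv : Orthonormal ℝ v) :
    (∃ T : V →L[ℝ] U, ∀ f, HasSum (fun i => (θ i * ⟪f, v i⟫) • u i) (T f)) ↔
      ∃ M, ∀ i, |θ i| ≤ M :=
  ⟨fun ⟨T, hT⟩ => ⟨‖T‖, abs_le_opNorm_of_hasSum_smul hu hv T hT⟩,
    fun ⟨_, hθ⟩ => hu.exists_hasSum_smul_of_abs_le hv hθ⟩

end DiagonalOperator

section MSECoefficients

theorem abs_div_sq_add_div_le_inv {s d p c : ℝ} (hc : 0 < c) (hs : 0 < s) (hp : 0 < p)
    (h : c * (s * p) ≤ d) : |s / (s ^ 2 + d / p)| ≤ c⁻¹ := by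
  have hcs : c * s ≤ d / p := by rw [le_div_iff₀ hp]; linarith
  have hcs_pos : 0 < c * s := by positivity
  rw [abs_of_nonneg (div_nonneg hs.le (by nlinarith))]
  calc s / (s ^ 2 + d / p) ≤ s / (c * s) := by gcongr; nlinarith
    _ = c⁻¹ := by field_simp

theorem inv_two_mul_mul_le_of_div_sq_add_div_le {s d p M : ℝ} (hs : 0 ≤ s) (hd : 0 < d)
    (hp : 0 < p) (hM : 0 < M) (hθ : s / (s ^ 2 + d / p) ≤ M) (hsM : s ≤ (2 * M)⁻¹) :
    (2 * M)⁻¹ * (s * p) ≤ d := by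
  have hden : 0 < s ^ 2 + d / p := by positivity
  have h1 : s ≤ M * s ^ 2 + M * (d / p) := by rw [div_le_iff₀ hden] at hθ; linarith
  have hsM' : 2 * M * s ≤ 1 :=
    calc 2 * M * s ≤ 2 * M * (2 * M)⁻¹ := by gcongr
      _ = 1 := mul_inv_cancel₀ (by positivity)
  have h2 : s ≤ 2 * M * (d / p) := by nlinarith
  rw [inv_mul_le_iff₀ (by positivity)]
  calc s * p ≤ 2 * M * (d / p) * p := by gcongr
    _ = 2 * M * d := by field_simp

noncomputable def mseCoeff (σ Δ P : ℕ → ℝ) (n : ℕ) : ℝ := σ n / (σ n ^ 2 + Δ n / P n)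

variable {σ Δ P : ℕ → ℝ}

theorem exists_abs_mseCoeff_le_iff (hσ : ∀ n, 0 < σ n) (hσ0 : Tendsto σ atTop (𝓝 0))
    (hΔ : ∀ n, 0 < Δ n) (hP : ∀ n, 0 < P n) :
    (∃ M, ∀ n, |mseCoeff σ Δ P n| ≤ M) ↔ ∃ c > 0, ∀ᶠ n in atTop, c * (σ n * P n) ≤ Δ n := by
  constructor
  · rintro ⟨M, hM⟩
    obtain ⟨M', hM', hMM'⟩ : ∃ M' > 0, M ≤ M' := ⟨max M 1, by positivity, le_max_left _ _⟩
    refine ⟨(2 * M')⁻¹, by positivity, ?_⟩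
    filter_upwards [hσ0.eventually_le_const (inv_pos.2 (mul_pos two_pos hM'))] with n hn
    exact inv_two_mul_mul_le_of_div_sq_add_div_le (hσ n).le (hΔ n) (hP n) hM'
      (((le_abs_self _).trans (hM n)).trans hMM') hn
  · rintro ⟨c, hc, hcΔ⟩
    have hbdd : IsBoundedUnder (· ≤ ·) atTop fun n => |mseCoeff σ Δ P n| :=
      isBoundedUnder_of_eventually_le <| hcΔ.mono fun n hn =>
        abs_div_sq_add_div_le_inv hc (hσ n) (hP n) hn
    obtain ⟨M, hM⟩ := hbdd.bddAbove_range
    exact ⟨M, fun n => hM ⟨n, rfl⟩⟩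

theorem eventually_mul_mul_le_of_eventually_mul_le {c : ℝ} (hσ0 : Tendsto σ atTop (𝓝 0))
    (hP : ∀ n, 0 < P n) (hc : 0 ≤ c) (h : ∀ᶠ n in atTop, c * P n ≤ Δ n) :
    ∀ᶠ n in atTop, c * (σ n * P n) ≤ Δ n := by
  filter_upwards [h, hσ0.eventually_le_const one_pos] with n hn hσn
  nlinarith [mul_nonneg hc (hP n).le]

end MSECoefficients

theorem stmt_19_general {U V : Type*}
    [NormedAddCommGroup U] [InnerProductSpace ℝ U] [CompleteSpace U]
    [NormedAddCommGroup V] [InnerProductSpace ℝ V]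
    (u : ℕ → U) (v : ℕ → V)
    (hu : Orthonormal ℝ u) (hv : Orthonormal ℝ v)
    (σ Δ P : ℕ → ℝ)
    (hσ : ∀ n, 0 < σ n) (hσ0 : Tendsto σ atTop (𝓝 0))
    (hΔ : ∀ n, 0 < Δ n) (hP : ∀ n, 0 < P n) :
    ((∃ T : V →L[ℝ] U, ∀ f : V,
        HasSum (fun n => ((σ n / (σ n ^ 2 + Δ n / P n)) * ⟪f, v n⟫) • u n) (T f)) ↔
      ∃ c > (0 : ℝ), ∃ N : ℕ, ∀ n ≥ N, Δ n ≥ c * (σ n * P n)) ∧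
    ((∃ c > (0 : ℝ), ∃ N : ℕ, ∀ n ≥ N, Δ n ≥ c * P n) →
      ∃ T : V →L[ℝ] U, ∀ f : V,
        HasSum (fun n => ((σ n / (σ n ^ 2 + Δ n / P n)) * ⟪f, v n⟫) • u n) (T f)) := by
  have key : (∃ T : V →L[ℝ] U, ∀ f : V,
      HasSum (fun n => (mseCoeff σ Δ P n * ⟪f, v n⟫) • u n) (T f)) ↔
        ∃ c > (0 : ℝ), ∀ᶠ n in atTop, c * (σ n * P n) ≤ Δ n :=
    (hu.exists_hasSum_smul_iff hv).trans (exists_abs_mseCoeff_le_iff hσ hσ0 hΔ hP)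
  simp only [eventually_atTop] at key
  refine ⟨key, fun ⟨c, hc, hcP⟩ => key.2 ⟨c, hc, ?_⟩⟩
  exact eventually_atTop.1 <|
    eventually_mul_mul_le_of_eventually_mul_le hσ0 hP hc.le (eventually_atTop.2 hcP)

/-- Continuity of the learned MSE-optimal spectral reconstruction: with orthonormal
families `(u_n)`, `(v_n)`, positive singular values `σ_n → 0` and positive noise/data
variances `Δ_n`, `Π_n`, the map `f ↦ Σ_n (σ_n/(σ_n² + Δ_n/Π_n)) ⟨f, v_n⟩ u_n` defines a
continuous (bounded) linear operator `V → U` iff there is `c > 0` with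
`Δ_n ≥ c σ_n Π_n` for all but finitely many `n`; in particular this holds if
`Δ_n ≥ c Π_n` for some `c > 0` and all sufficiently large `n`. -/
theorem stmt_19 {U V : Type*}
    [NormedAddCommGroup U] [InnerProductSpace ℝ U] [CompleteSpace U]
    [NormedAddCommGroup V] [InnerProductSpace ℝ V] [CompleteSpace V]
    (u : ℕ → U) (v : ℕ → V)
    (hu : Orthonormal ℝ u) (hv : Orthonormal ℝ v)
    (σ Δ P : ℕ → ℝ)
    (hσ : ∀ n, 0 < σ n) (hσ0 : Tendsto σ atTop (𝓝 0))
    (hΔ : ∀ n, 0 < Δ n) (hP : ∀ n, 0 < P n) :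
    ((∃ T : V →L[ℝ] U, ∀ f : V,
        HasSum (fun n => ((σ n / (σ n ^ 2 + Δ n / P n)) * ⟪f, v n⟫) • u n) (T f)) ↔
      ∃ c > (0 : ℝ), ∃ N : ℕ, ∀ n ≥ N, Δ n ≥ c * (σ n * P n)) ∧
    ((∃ c > (0 : ℝ), ∃ N : ℕ, ∀ n ≥ N, Δ n ≥ c * P n) →
      ∃ T : V →L[ℝ] U, ∀ f : V,
        HasSum (fun n => ((σ n / (σ n ^ 2 + Δ n / P n)) * ⟪f, v n⟫) • u n) (T f)) :=
  stmt_19_general u v hu hv σ Δ P hσ hσ0 hΔ hP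
end
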